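/- arXiv:math/0603434 — 6 statements merged into one kernel-verified Lean document; each statement's English description precedes it below -/
import Mathlib

section
/- Let G be a countable group with a weakly mixing measure-preserving action on a probability space (X,μ). Let 𝒢 be a Polish group whose topology is induced by a complete metric d that is bi-invariant (d(ag, ah) = d(g, h) = d(ga, ha) for all a, g, h ∈ 𝒢), and let K be a closed subgroup of 𝒢. Let γ : G × X → K be a 1-cocycle, let v : X → 𝒢 be a measurable map and θ : G → 𝒢 a group homomorphism such that γ(g, x) = v(g • x)·θ(g)·v(x)⁻¹ for μ-a.e. x, for every g ∈ G. If v₀ ∈ 𝒢 is an essential value of v (i.e., μ({x : d(v(x), v₀) < ε}) > 0 for every ε > 0), then v(x)·v₀⁻¹ ∈ K for μ-a.e. x ∈ X, and v₀·θ(g)·v₀⁻¹ ∈ K for every g ∈ G. -/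
/-!
The function `(x, y) ↦ infDist (v x * (v y)⁻¹) K` on `X × X` is invariant under the diagonal
action, because `v (g • x) * (v (g • y))⁻¹ = γ(g,x) * (v x * (v y)⁻¹) * γ(g,y)⁻¹` and, the metric
being bi-invariant, the distance to `K` is invariant under multiplication by elements of `K` on
either side. Its sublevel sets have positive measure since `v₀` is an essential value, so weak
mixing forces it to vanish a.e.: `v x * (v y)⁻¹ ∈ K` for a.e. `(x, y)`. By Fubini, `v` takes a.e.
its values in a closed coset `K * w`, which then contains the essential value `v₀` as well.
-/

open MeasureTheory Metric

namespace Subgroup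

variable {M : Type*} [Group M] [PseudoMetricSpace M] (K : Subgroup M)

theorem infDist_mul_left [IsIsometricSMul M M] {k : M} (hk : k ∈ K) (x : M) :
    infDist (k * x) K = infDist x K := by
  calc infDist (k * x) K = infDist (k • x) ((k • ·) '' K) := by
        rw [Set.image_smul, smul_coe_set hk, smul_eq_mul]
    _ = infDist x K := infDist_image (isometry_smul M k)

theorem infDist_mul_right [IsIsometricSMul Mᵐᵒᵖ M] {k : M} (hk : k ∈ K) (x : M) :
    infDist (x * k) K = infDist x K := by
  calc infDist (x * k) K = infDist (MulOpposite.op k • x) ((MulOpposite.op k • ·) '' K) := by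
        rw [Set.image_smul, op_smul_coe_set hk, MulOpposite.smul_eq_mul_unop, MulOpposite.unop_op]
    _ = infDist x K := infDist_image (isometry_smul M (MulOpposite.op k))

theorem infDist_mul_inv_le_dist [IsIsometricSMul Mᵐᵒᵖ M] (x y : M) :
    infDist (x * y⁻¹) K ≤ dist x y :=
  calc infDist (x * y⁻¹) K ≤ dist (x * y⁻¹) 1 := infDist_le_dist_of_mem K.one_mem
    _ = dist x y := by rw [← dist_mul_right _ _ y, inv_mul_cancel_right, one_mul]

end Subgroup

namespace MeasureTheory

variable {α : Type*} [MeasurableSpace α] {ν : Measure α}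

-- Weak mixing of an action is this property for the family of diagonal maps on `X × X`.
def IsErgodicFamily {ι : Type*} (T : ι → α → α) (ν : Measure α) : Prop :=
  ∀ S : Set α, MeasurableSet S → (∀ i, ν (symmDiff S (T i ⁻¹' S)) = 0) → ν S = 0 ∨ ν Sᶜ = 0

theorem IsErgodicFamily.ae_mem_of_ae_invariant {ι : Type*} {T : ι → α → α}
    (hT : IsErgodicFamily T ν) {S : Set α} (hS : MeasurableSet S) (hinv : ∀ i, T i ⁻¹' S =ᵐ[ν] S)
    (hpos : ν S ≠ 0) : ∀ᵐ p ∂ν, p ∈ S :=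
  mem_ae_iff.2 <| (hT S hS fun i => measure_symmDiff_eq_zero_iff.2 (hinv i).symm).resolve_left hpos

theorem IsErgodicFamily.ae_lt_of_ae_invariant {ι : Type*} {T : ι → α → α}
    (hT : IsErgodicFamily T ν) {f : α → ℝ} (hf : Measurable f)
    (hinv : ∀ i, ∀ᵐ p ∂ν, f (T i p) = f p) {ε : ℝ} (hpos : ν {p | f p < ε} ≠ 0) :
    ∀ᵐ p ∂ν, f p < ε :=
  hT.ae_mem_of_ae_invariant (measurableSet_lt hf measurable_const)
    (fun i => by filter_upwards [hinv i] with p hp using congrArg (· < ε) hp) hpos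

theorem ae_le_of_forall_pos_ae_lt_add {f : α → ℝ} {c : ℝ}
    (h : ∀ ε > 0, ∀ᵐ p ∂ν, f p < c + ε) : ∀ᵐ p ∂ν, f p ≤ c := by
  have hseq : ∀ᵐ p ∂ν, ∀ n : ℕ, f p < c + 1 / (n + 1) :=
    ae_all_iff.2 fun n => h _ Nat.one_div_pos_of_nat
  filter_upwards [hseq] with p hp
  refine le_of_forall_pos_lt_add fun ε hε => ?_
  obtain ⟨n, hn⟩ := exists_nat_one_div_lt hε
  linarith [hp n]

def IsEssentialValue {M : Type*} [PseudoMetricSpace M] (ν : Measure α) (v : α → M) (v₀ : M) :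
    Prop :=
  ∀ ε > 0, 0 < ν {x | dist (v x) v₀ < ε}

namespace IsEssentialValue

variable {M : Type*} [PseudoMetricSpace M] {v : α → M} {v₀ : M}

theorem mem_of_ae_mem (hv₀ : IsEssentialValue ν v v₀) {C : Set M} (hC : IsClosed C)
    (h : ∀ᵐ x ∂ν, v x ∈ C) : v₀ ∈ C := by
  refine hC.closure_subset (Metric.mem_closure_iff.2 fun ε hε => ?_)
  obtain ⟨x, hclose, hx⟩ :=
    ((frequently_ae_mem_iff.2 (hv₀ ε hε).ne').and_eventually h).exists
  exact ⟨v x, hx, by rw [dist_comm]; exact hclose⟩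

theorem measure_prod_dist_lt_pos [SFinite ν] (hv₀ : IsEssentialValue ν v v₀) {ε : ℝ}
    (hε : 0 < ε) : 0 < (ν.prod ν) {p | dist (v p.1) (v p.2) < ε} := by
  set A := {x | dist (v x) v₀ < ε / 2}
  have hA : 0 < ν A := hv₀ _ (half_pos hε)
  have hsub : A ×ˢ A ⊆ {p | dist (v p.1) (v p.2) < ε} := by
    rintro ⟨x, y⟩ ⟨hx, hy⟩
    calc dist (v x) (v y) ≤ dist (v x) v₀ + dist (v y) v₀ := dist_triangle_right _ _ _
      _ < ε / 2 + ε / 2 := add_lt_add hx hy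
      _ = ε := add_halves ε
  refine lt_of_lt_of_le ?_ (measure_mono hsub)
  rw [Measure.prod_prod]
  exact ENNReal.mul_pos hA.ne' hA.ne'

end IsEssentialValue

section Untwisting

variable {G X M : Type*} [MeasurableSpace X] {μ : Measure X} {a : G → X → X}
  [Group M] {K : Subgroup M} {γ : G → X → M} {v : X → M} {θ : G → M}

theorem ae_infDist_mul_inv_map_eq [PseudoMetricSpace M] [IsIsometricSMul M M]
    [IsIsometricSMul Mᵐᵒᵖ M]
    (hγK : ∀ g x, γ g x ∈ K) (huntwist : ∀ g, ∀ᵐ x ∂μ, γ g x = v (a g x) * θ g * (v x)⁻¹)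
    (g : G) : ∀ᵐ p ∂μ.prod μ,
      infDist (v (a g p.1) * (v (a g p.2))⁻¹) K = infDist (v p.1 * (v p.2)⁻¹) K := by
  filter_upwards [Measure.quasiMeasurePreserving_fst.ae (huntwist g),
    Measure.quasiMeasurePreserving_snd.ae (huntwist g)] with p h₁ h₂
  have hconj : v (a g p.1) * (v (a g p.2))⁻¹ = γ g p.1 * (v p.1 * (v p.2)⁻¹) * (γ g p.2)⁻¹ := by
    rw [h₁, h₂]; group
  rw [hconj, K.infDist_mul_right (K.inv_mem (hγK g p.2)), K.infDist_mul_left (hγK g p.1)]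

theorem ae_prod_mul_inv_mem_of_untwist [PseudoMetricSpace M] [MeasurableSpace M]
    [BorelSpace M] [SecondCountableTopology M] [IsTopologicalGroup M] [IsIsometricSMul M M]
    [IsIsometricSMul Mᵐᵒᵖ M] [SFinite μ]
    (hmix : IsErgodicFamily (fun g (p : X × X) => (a g p.1, a g p.2)) (μ.prod μ))
    (hK : IsClosed (K : Set M)) (hγK : ∀ g x, γ g x ∈ K) (hv : Measurable v)
    (huntwist : ∀ g, ∀ᵐ x ∂μ, γ g x = v (a g x) * θ g * (v x)⁻¹) {v₀ : M}
    (hv₀ : IsEssentialValue μ v v₀) : ∀ᵐ p ∂μ.prod μ, v p.1 * (v p.2)⁻¹ ∈ K := by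
  set f : X × X → ℝ := fun p => infDist (v p.1 * (v p.2)⁻¹) K
  have hf : Measurable f := (continuous_infDist_pt _).measurable.comp
    ((hv.comp measurable_fst).mul (hv.comp measurable_snd).inv)
  have hsmall : ∀ ε > 0, ∀ᵐ p ∂μ.prod μ, f p < 0 + ε := fun ε hε => by
    rw [zero_add]
    refine hmix.ae_lt_of_ae_invariant hf (ae_infDist_mul_inv_map_eq hγK huntwist) ?_
    refine (lt_of_lt_of_le (hv₀.measure_prod_dist_lt_pos hε) (measure_mono ?_)).ne'
    exact fun p hp => (K.infDist_mul_inv_le_dist _ _).trans_lt hp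
  filter_upwards [ae_le_of_forall_pos_ae_lt_add hsmall] with p hp
  exact (hK.mem_iff_infDist_zero ⟨1, K.one_mem⟩).2 (le_antisymm hp infDist_nonneg)

theorem IsEssentialValue.ae_mul_inv_mem [PseudoMetricSpace M] [IsTopologicalGroup M] [SFinite μ]
    {v₀ : M} (hv₀ : IsEssentialValue μ v v₀) (hK : IsClosed (K : Set M))
    (h : ∀ᵐ p ∂μ.prod μ, v p.1 * (v p.2)⁻¹ ∈ K) : ∀ᵐ x ∂μ, v x * v₀⁻¹ ∈ K := by
  obtain ⟨x₀, -, hx₀⟩ := ((frequently_ae_mem_iff.2 (hv₀ 1 one_pos).ne').and_eventually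
    (Measure.ae_ae_of_ae_prod h)).exists
  have hcoset : v x₀ * v₀⁻¹ ∈ K :=
    hv₀.mem_of_ae_mem (C := {m | v x₀ * m⁻¹ ∈ K})
      (hK.preimage (continuous_const.mul continuous_inv)) hx₀
  filter_upwards [hx₀] with x hx
  simpa using K.mul_mem (K.inv_mem hx) hcoset

theorem conj_mem_of_ae_mul_inv_mem [NeZero μ] {g : G}
    (hg : Measure.QuasiMeasurePreserving (a g) μ μ) (hγK : ∀ x, γ g x ∈ K)
    (huntwist : ∀ᵐ x ∂μ, γ g x = v (a g x) * θ g * (v x)⁻¹) {v₀ : M}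
    (h : ∀ᵐ x ∂μ, v x * v₀⁻¹ ∈ K) : v₀ * θ g * v₀⁻¹ ∈ K := by
  obtain ⟨x, hgx, hγ, hx⟩ := ((hg.ae h).and (huntwist.and h)).exists
  have hconj : v₀ * θ g * v₀⁻¹ = (v (a g x) * v₀⁻¹)⁻¹ * γ g x * (v x * v₀⁻¹) := by
    rw [hγ]; group
  rw [hconj]
  exact K.mul_mem (K.mul_mem (K.inv_mem hgx) (hγK x)) hx

end Untwisting

end MeasureTheory

theorem essential_value_untwisting_general
    {G : Type} [Group G]
    {X : Type} [MeasurableSpace X]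
    (μ : Measure X) [IsProbabilityMeasure μ]
    (a : G → X → X)
    (hmp : ∀ g, MeasurePreserving (a g) μ μ)
    (hwmix : ∀ S : Set (X × X), MeasurableSet S →
      (∀ g : G, (μ.prod μ) (symmDiff S ((fun p => (a g p.1, a g p.2)) ⁻¹' S)) = 0) →
      (μ.prod μ) S = 0 ∨ (μ.prod μ) Sᶜ = 0)
    (𝓖 : Type) [Group 𝓖] [MetricSpace 𝓖]
    [TopologicalSpace.SeparableSpace 𝓖] [IsTopologicalGroup 𝓖]
    (hbi : ∀ c g h : 𝓖, dist (c * g) (c * h) = dist g h ∧ dist (g * c) (h * c) = dist g h)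
    (K : Subgroup 𝓖) (hK : IsClosed (K : Set 𝓖))
    (γ : G → X → 𝓖) (hγK : ∀ g x, γ g x ∈ K)
    (v : X → 𝓖) (hv : @Measurable X 𝓖 _ (borel 𝓖) v)
    (θ : G →* 𝓖)
    (huntwist : ∀ g : G, ∀ᵐ x ∂μ, γ g x = v (a g x) * θ g * (v x)⁻¹)
    (v₀ : 𝓖) (hess : ∀ ε : ℝ, 0 < ε → 0 < μ {x | dist (v x) v₀ < ε}) :
    (∀ᵐ x ∂μ, v x * v₀⁻¹ ∈ K) ∧ (∀ g : G, v₀ * θ g * v₀⁻¹ ∈ K) := by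
  let : MeasurableSpace 𝓖 := borel 𝓖
  have : BorelSpace 𝓖 := ⟨rfl⟩
  have := UniformSpace.secondCountable_of_separable 𝓖
  have : IsIsometricSMul 𝓖 𝓖 := ⟨fun c => Isometry.of_dist_eq fun g h => (hbi c g h).1⟩
  have : IsIsometricSMul 𝓖ᵐᵒᵖ 𝓖 := ⟨fun c => Isometry.of_dist_eq fun g h => (hbi c.unop g h).2⟩
  have hmem : ∀ᵐ x ∂μ, v x * v₀⁻¹ ∈ K :=
    IsEssentialValue.ae_mul_inv_mem hess hK
      (ae_prod_mul_inv_mem_of_untwist hwmix hK hγK hv huntwist hess)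
  exact ⟨hmem, fun g =>
    conj_mem_of_ae_mul_inv_mem (hmp g).quasiMeasurePreserving (hγK g) (huntwist g) hmem⟩

/-- **Popa's untwisting lemma for essential values.**
Let `G` be a countable group with a weakly mixing measure-preserving action on `(X,μ)`, let
`𝓖` be a Polish group with a complete bi-invariant metric, `K ≤ 𝓖` a closed subgroup, and
`γ` a `K`-valued `1`-cocycle untwisted in `𝓖` as `γ(g,x) = v(g•x)·θ(g)·v(x)⁻¹`.  If `v₀` is
an essential value of `v`, then `v(x)·v₀⁻¹ ∈ K` for a.e. `x` and `v₀·θ(g)·v₀⁻¹ ∈ K` for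
every `g`. -/
theorem essential_value_untwisting
    {G : Type} [Group G] [Countable G]
    {X : Type} [MeasurableSpace X]
    (μ : Measure X) [IsProbabilityMeasure μ]
    (a : G → X → X)
    (hmeas : ∀ g, Measurable (a g)) (hmp : ∀ g, MeasurePreserving (a g) μ μ)
    (hone : ∀ x, a 1 x = x) (hmul : ∀ g h x, a (g * h) x = a g (a h x))
    (hwmix : ∀ S : Set (X × X), MeasurableSet S →
      (∀ g : G, (μ.prod μ) (symmDiff S ((fun p => (a g p.1, a g p.2)) ⁻¹' S)) = 0) →
      (μ.prod μ) S = 0 ∨ (μ.prod μ) Sᶜ = 0)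
    (𝓖 : Type) [Group 𝓖] [MetricSpace 𝓖] [CompleteSpace 𝓖]
    [TopologicalSpace.SeparableSpace 𝓖] [IsTopologicalGroup 𝓖]
    (hbi : ∀ c g h : 𝓖, dist (c * g) (c * h) = dist g h ∧ dist (g * c) (h * c) = dist g h)
    (K : Subgroup 𝓖) (hK : IsClosed (K : Set 𝓖))
    (γ : G → X → 𝓖) (hγK : ∀ g x, γ g x ∈ K)
    (hγmeas : ∀ g : G, @Measurable X 𝓖 _ (borel 𝓖) (γ g))
    (hcoc : ∀ g h : G, ∀ᵐ x ∂μ, γ (g * h) x = γ g (a h x) * γ h x)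
    (v : X → 𝓖) (hv : @Measurable X 𝓖 _ (borel 𝓖) v)
    (θ : G →* 𝓖)
    (huntwist : ∀ g : G, ∀ᵐ x ∂μ, γ g x = v (a g x) * θ g * (v x)⁻¹)
    (v₀ : 𝓖) (hess : ∀ ε : ℝ, 0 < ε → 0 < μ {x | dist (v x) v₀ < ε}) :
    (∀ᵐ x ∂μ, v x * v₀⁻¹ ∈ K) ∧ (∀ g : G, v₀ * θ g * v₀⁻¹ ∈ K) :=
  essential_value_untwisting_general μ a hmp hwmix 𝓖 hbi K hK γ hγK v hv θ huntwist v₀ hess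
end

section
/- Let 𝕋 = ℝ/ℤ with quotient map p : ℝ → 𝕋 and Haar probability measure λ, and let f : 𝕋 → ℝ be the unique function with f(x) ∈ (−1/2, 1/2] and p(f(x)) = x for all x ∈ 𝕋. For t ∈ ℝ define α_t : 𝕋² → 𝕋² by α_t(x,y) = (x + p(t·f(y−x)), y + p(t·f(y−x))). Then: (i) every α_t preserves the product measure λ ⊗ λ on 𝕋²; (ii) α_0 = id and α_s ∘ α_t = α_{s+t} for all s, t ∈ ℝ; (iii) α_1(x,y) = (y, 2y − x) for all (x,y) ∈ 𝕋² (in particular the first coordinate of α_1(x,y) is y); (iv) α_t commutes with diagonal rotations: α_t(x + c, y + c) = α_t(x,y) + (c,c) for all c ∈ 𝕋. -/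
/-!
`α_t` translates both coordinates by the same amount `t · f (y - x)`, which depends only on the
difference `y - x`; this difference is therefore invariant, which makes `t ↦ α_t` additive and
`α_t` equivariant under diagonal rotations. In the coordinates `(x, y - x)` the map `α_t` becomes
the skew translation `(x, d) ↦ (x + t · f d, d)`, which preserves Haar measure by Fubini.
-/

open MeasureTheory

def diffShift {G : Type*} [AddGroup G] (h : G → G) (q : G × G) : G × G :=
  (q.1 + h (q.2 - q.1), q.2 + h (q.2 - q.1))

section AddGroup

variable {G : Type*} [AddGroup G]

theorem diffShift_zero : diffShift (0 : G → G) = id := by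
  ext q <;> simp [diffShift]

theorem diffShift_comp (h k : G → G) : diffShift h ∘ diffShift k = diffShift (k + h) := by
  ext q <;> simp [diffShift, add_assoc]

theorem measurePreserving_add_comp_prod [MeasurableSpace G] [MeasurableAdd₂ G]
    (μ ν : Measure G) [SFinite μ] [SFinite ν] [μ.IsAddRightInvariant] {h : G → G}
    (hh : Measurable h) :
    MeasurePreserving (fun z : G × G => (z.1 + h z.2, z.2)) (μ.prod ν) (μ.prod ν) := by
  have skew : MeasurePreserving (fun z : G × G => (z.1, z.2 + h z.1)) (ν.prod μ) (ν.prod μ) :=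
    (MeasurePreserving.id ν).skew_product (g := fun d x => x + h d)
      (measurable_snd.add (hh.comp measurable_fst))
      (Filter.Eventually.of_forall fun d => map_add_right_eq_self μ (h d))
  exact Measure.measurePreserving_swap.comp (skew.comp Measure.measurePreserving_swap)

theorem measurePreserving_diffShift [MeasurableSpace G] [MeasurableAdd₂ G] [MeasurableNeg G]
    (μ : Measure G) [SFinite μ] [μ.IsAddRightInvariant] {h : G → G} (hh : Measurable h) :
    MeasurePreserving (diffShift h) (μ.prod μ) (μ.prod μ) := by
  have hconj : diffShift h = (fun z : G × G => (z.1, z.2 + z.1)) ∘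
      (fun z : G × G => (z.1 + h z.2, z.2)) ∘ (fun z : G × G => (z.1, z.2 - z.1)) := by
    ext q <;> simp [diffShift, ← add_assoc]
  rw [hconj]
  exact (measurePreserving_prod_add_right μ μ).comp
    ((measurePreserving_add_comp_prod μ μ hh).comp (measurePreserving_prod_sub μ μ))

end AddGroup

theorem diffShift_add_diag {G : Type*} [AddCommGroup G] (h : G → G) (q : G × G) (c : G) :
    diffShift h (q + (c, c)) = diffShift h q + (c, c) := by
  ext <;> simp [diffShift, add_sub_add_right_eq_sub, add_right_comm]

theorem AddCircle.eq_coe_equivIoc_of_mem_Ioc {T : ℝ} [Fact (0 < T)] {a : ℝ}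
    {f : AddCircle T → ℝ} (hf : ∀ x, f x ∈ Set.Ioc a (a + T) ∧ (f x : AddCircle T) = x) :
    f = fun x => (AddCircle.equivIoc T a x : ℝ) := by
  funext x
  conv_rhs => rw [← (hf x).2]
  exact (AddCircle.equivIoc_coe_of_mem (hf x).1).symm

theorem AddCircle.measurable_of_mem_Ioc {T : ℝ} [Fact (0 < T)] {a : ℝ}
    {f : AddCircle T → ℝ} (hf : ∀ x, f x ∈ Set.Ioc a (a + T) ∧ (f x : AddCircle T) = x) :
    Measurable f := by
  rw [AddCircle.eq_coe_equivIoc_of_mem_Ioc hf]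
  exact measurable_subtype_coe.comp (AddCircle.measurableEquivIoc T a).measurable

/-- **The malleability flow on the two-torus.**
Let `f : 𝕋 → ℝ` be the unique lift with values in `(−1/2, 1/2]` and let
`α_t(x,y) = (x + t·f(y−x), y + t·f(y−x))`.  Then each `α_t` preserves the Haar probability
measure `λ ⊗ λ` on `𝕋²`, `(α_t)` is a one-parameter flow, `α_1(x,y) = (y, 2y − x)`, and the
flow commutes with diagonal rotations. -/
theorem malleability_flow_torus
    (f : AddCircle (1 : ℝ) → ℝ)
    (hf : ∀ x : AddCircle (1 : ℝ),
      f x ∈ Set.Ioc (-(1 / 2) : ℝ) (1 / 2) ∧ ((f x : ℝ) : AddCircle (1 : ℝ)) = x)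
    (α : ℝ → AddCircle (1 : ℝ) × AddCircle (1 : ℝ) →
      AddCircle (1 : ℝ) × AddCircle (1 : ℝ))
    (hα : ∀ (t : ℝ) (x y : AddCircle (1 : ℝ)),
      α t (x, y) = (x + ((t * f (y - x) : ℝ) : AddCircle (1 : ℝ)),
                    y + ((t * f (y - x) : ℝ) : AddCircle (1 : ℝ)))) :
    (∀ t : ℝ, MeasurePreserving (α t)
      ((volume : Measure (AddCircle (1 : ℝ))).prod volume)
      ((volume : Measure (AddCircle (1 : ℝ))).prod volume)) ∧
    (α 0 = id) ∧
    (∀ s t : ℝ, α s ∘ α t = α (s + t)) ∧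
    (∀ x y : AddCircle (1 : ℝ), α 1 (x, y) = (y, y + y - x)) ∧
    (∀ (t : ℝ) (x y c : AddCircle (1 : ℝ)),
      α t (x + c, y + c) = ((α t (x, y)).1 + c, (α t (x, y)).2 + c)) := by
  have hα_eq (t : ℝ) : α t = diffShift fun d => ((t * f d : ℝ) : AddCircle (1 : ℝ)) :=
    funext fun q => hα t q.1 q.2
  have hf_meas : Measurable f :=
    AddCircle.measurable_of_mem_Ioc (a := -(1 / 2)) fun x => by norm_num [hf x]
  refine ⟨fun t => ?_, ?_, fun s t => ?_, fun x y => ?_, fun t x y c => ?_⟩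
  · rw [hα_eq]
    exact measurePreserving_diffShift volume
      (AddCircle.measurable_mk'.comp (measurable_const.mul hf_meas))
  · rw [hα_eq, ← diffShift_zero]
    congr with d
    simp
  · rw [hα_eq, hα_eq, hα_eq, diffShift_comp]
    congr with d
    simp [add_mul, add_comm]
  · rw [hα, one_mul, (hf (y - x)).2, add_sub_cancel, ← add_sub_assoc]
  · rw [hα_eq]
    exact diffShift_add_diag _ (x, y) c
end

section
/- Let 𝕋 = ℝ/ℤ with quotient map p : ℝ → 𝕋 and Haar probability measure λ, let f : 𝕋 → ℝ be the unique function with f(x) ∈ (−1/2, 1/2] and p(f(x)) = x, and for t ∈ ℝ let α_t : 𝕋² → 𝕋² be α_t(x,y) = (x + p(t·f(y−x)), y + p(t·f(y−x))). Define β : 𝕋² → 𝕋² by β(x,y) = (x, 2x − y). Then: (i) β preserves the product measure λ ⊗ λ; (ii) β ∘ β = id; (iii) β fixes the first coordinate; (iv) for every t ∈ ℝ and every (x,y) ∈ 𝕋² with y − x ≠ p(1/2), one has β(α_t(x,y)) = α_{−t}(β(x,y)); in particular this identity holds (λ⊗λ)-almost everywhere. -/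
/-!
β is the reflection `y ↦ 2x − y` of the second coordinate through the first, so it preserves
`λ ⊗ λ` by invariance of Haar measure under `y ↦ c − y`, and it commutes with the diagonal
translations by which `α_t` moves points. It sends `y − x` to `x − y`, so `β ∘ α_t = α_{−t} ∘ β`
reduces to the oddness of `f`, which fails only on the null set `{y − x = 1/2}`.
-/

open MeasureTheory

namespace AddCircle

instance nullSingletonClass_volume (T : ℝ) [Fact (0 < T)] :
    NullSingletonClass (volume : Measure (AddCircle T)) where
  measure_singleton x := by
    rw [← Metric.closedBall_zero, volume_closedBall, mul_zero,
      min_eq_right (Fact.out : 0 < T).le, ENNReal.ofReal_zero]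

/-- The point `p/2` is excluded because it is its own negative while its representative `p/2`
is not. -/
theorem map_neg_of_ne_coe_half {p : ℝ} [Fact (0 < p)] {f : AddCircle p → ℝ}
    (hf : ∀ x, f x ∈ Set.Ioc (-(p / 2)) (p / 2) ∧ (f x : AddCircle p) = x)
    {z : AddCircle p} (hz : z ≠ ((p / 2 : ℝ) : AddCircle p)) : f (-z) = -f z := by
  obtain ⟨⟨hlo, hhi⟩, hcoe⟩ := hf z
  have hlt : f z < p / 2 := hhi.lt_of_ne fun h => hz (by rw [← hcoe, h])
  have hIoc : Set.Ioc (-(p / 2)) (p / 2) = Set.Ioc (-(p / 2)) (-(p / 2) + p) := by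
    congr 1; ring
  rw [hIoc] at hf
  refine (coe_eq_coe_iff_of_mem_Ioc (hf (-z)).1 ⟨by linarith, by linarith⟩).mp ?_
  rw [(hf (-z)).2, coe_neg, hcoe]

end AddCircle

section ReflectSnd

variable {G : Type*} [AddCommGroup G]

def reflectSnd (q : G × G) : G × G := (q.1, q.1 + q.1 - q.2)

@[simp]
theorem reflectSnd_apply (x y : G) : reflectSnd (x, y) = (x, x + x - y) := rfl

theorem reflectSnd_involutive : Function.Involutive (reflectSnd : G × G → G × G) := by
  rintro ⟨x, y⟩
  simp

theorem reflectSnd_add_diag (q : G × G) (s : G) :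
    reflectSnd (q + (s, s)) = reflectSnd q + (s, s) := by
  obtain ⟨x, y⟩ := q
  ext <;> simp only [reflectSnd_apply, Prod.mk_add_mk]; abel

theorem measurePreserving_reflectSnd [MeasurableSpace G] [MeasurableAdd₂ G] [MeasurableNeg G]
    (μ : Measure G) [SFinite μ] [μ.IsAddLeftInvariant] [μ.IsNegInvariant] :
    MeasurePreserving (reflectSnd : G × G → G × G) (μ.prod μ) (μ.prod μ) :=
  (MeasurePreserving.id μ).skew_product (g := fun x y => x + x - y)
    ((measurable_fst.add measurable_fst).sub measurable_snd)
    (.of_forall fun x => (μ.measurePreserving_sub_left (x + x)).map_eq)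

end ReflectSnd

theorem ae_prod_sub_ne {G : Type*} [AddGroup G] [MeasurableSpace G] [MeasurableSub₂ G]
    [MeasurableSingletonClass G] (μ : Measure G) [SFinite μ] [NullSingletonClass μ] (c : G) :
    ∀ᵐ q ∂μ.prod μ, q.2 - q.1 ≠ c := by
  refine (Measure.ae_prod_mem_iff_ae_ae_mem
    ((measurable_snd.sub measurable_fst) (measurableSet_singleton c)).compl).mpr ?_
  refine .of_forall fun x => ?_
  filter_upwards [μ.ae_ne (c + x)] with y hy
  simpa [sub_eq_iff_eq_add] using hy

/-- **The strong malleability involution on the two-torus.**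
With `f` and the flow `(α_t)` as in the malleability of Bernoulli actions, the involution
`β(x,y) = (x, 2x − y)` preserves `λ ⊗ λ`, has period `2`, fixes the first coordinate, and
anti-commutes with the flow: `β ∘ α_t = α_{−t} ∘ β` away from the set `{y − x = 1/2}`, in
particular almost everywhere. -/
theorem strong_malleability_involution_torus
    (f : AddCircle (1 : ℝ) → ℝ)
    (hf : ∀ x : AddCircle (1 : ℝ),
      f x ∈ Set.Ioc (-(1 / 2) : ℝ) (1 / 2) ∧ ((f x : ℝ) : AddCircle (1 : ℝ)) = x)
    (α : ℝ → AddCircle (1 : ℝ) × AddCircle (1 : ℝ) →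
      AddCircle (1 : ℝ) × AddCircle (1 : ℝ))
    (hα : ∀ (t : ℝ) (x y : AddCircle (1 : ℝ)),
      α t (x, y) = (x + ((t * f (y - x) : ℝ) : AddCircle (1 : ℝ)),
                    y + ((t * f (y - x) : ℝ) : AddCircle (1 : ℝ))))
    (β : AddCircle (1 : ℝ) × AddCircle (1 : ℝ) →
      AddCircle (1 : ℝ) × AddCircle (1 : ℝ))
    (hβ : ∀ x y : AddCircle (1 : ℝ), β (x, y) = (x, x + x - y)) :
    (MeasurePreserving β
      ((volume : Measure (AddCircle (1 : ℝ))).prod volume)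
      ((volume : Measure (AddCircle (1 : ℝ))).prod volume)) ∧
    (β ∘ β = id) ∧
    (∀ p : AddCircle (1 : ℝ) × AddCircle (1 : ℝ), (β p).1 = p.1) ∧
    (∀ (t : ℝ) (x y : AddCircle (1 : ℝ)),
      y - x ≠ (((1 / 2 : ℝ)) : AddCircle (1 : ℝ)) →
      β (α t (x, y)) = α (-t) (β (x, y))) ∧
    (∀ t : ℝ, ∀ᵐ p ∂((volume : Measure (AddCircle (1 : ℝ))).prod volume),
      β (α t p) = α (-t) (β p)) := by
  obtain rfl : β = reflectSnd := funext fun q => hβ q.1 q.2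
  have anticomm : ∀ (t : ℝ) (x y : AddCircle (1 : ℝ)),
      y - x ≠ (((1 / 2 : ℝ)) : AddCircle (1 : ℝ)) →
      reflectSnd (α t (x, y)) = α (-t) (reflectSnd (x, y)) := by
    intro t x y hxy
    have hodd : f (x + x - y - x) = -f (y - x) := by
      rw [show x + x - y - x = -(y - x) by abel]
      exact AddCircle.map_neg_of_ne_coe_half hf hxy
    rw [reflectSnd_apply x y, hα t, hα (-t), hodd, neg_mul_neg, ← Prod.mk_add_mk, reflectSnd_add_diag,
      reflectSnd_apply, Prod.mk_add_mk]
  refine ⟨measurePreserving_reflectSnd volume, reflectSnd_involutive.comp_self, fun _ => rfl,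
    anticomm, fun t => ?_⟩
  filter_upwards [ae_prod_sub_ne volume ((1 / 2 : ℝ) : AddCircle (1 : ℝ))] with q hq
  exact anticomm t q.1 q.2 hq
end

section
/- Let G be a countably infinite group with an essentially free, mixing, measure-preserving action on a standard probability space (X,μ). Then for every ε > 0 there exist n ≥ 1 and a measurable partition X = Q₁ ⊔ … ⊔ Q_n such that for every g ∈ G with g ≠ e one has Σ_{k=1}^n μ(Q_k ∩ g • Q_k) ≤ ε. -/
/-!
Fix measurable sets `E₀, E₁, …` separating the points of `X` and partition `X` according to which
of `E₀, …, E_{n-1}` contain a point. The self-overlap `∑ μ (Q ∩ g • Q)` of this partition is the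
measure of the set of `x` whose pattern agrees with that of `g⁻¹ • x`; it decreases in `n` and, by
separation, tends to `μ (Fix g⁻¹) = 0` for each `g ≠ 1`. For fixed `n`, mixing makes it tend to
`∑ μ (Q)² = (μ × μ) {(x, y) | same pattern}` as `g → ∞`, and this tends to the measure of the
diagonal as `n → ∞`, which vanishes because mixing and freeness leave no atoms. So one level `n₀`
handles all but finitely many `g`, and a finer level also handles the remaining ones.
-/

open MeasureTheory

noncomputable section

open Filter Set Topology
open scoped Pointwise

section Mixing

variable {G X : Type*} [Group G] [MulAction G X] [MeasurableSpace X] {μ : Measure X}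

variable (G) in
def IsMixing (μ : Measure X) : Prop :=
  ∀ A B : Set X, MeasurableSet A → MeasurableSet B →
    Tendsto (fun g : G => μ.real (A ∩ g • B)) cofinite (𝓝 (μ.real A * μ.real B))

theorem isMixing_of_forall_exists_finset
    (h : ∀ A B : Set X, MeasurableSet A → MeasurableSet B → ∀ δ : ℝ, 0 < δ →
      ∃ F : Finset G, ∀ g : G, g ∉ F → |μ.real (A ∩ g • B) - μ.real A * μ.real B| ≤ δ) :
    IsMixing G μ := by
  intro A B hA hB
  rw [Metric.tendsto_nhds]
  intro δ hδ
  obtain ⟨F, hF⟩ := h A B hA hB (δ / 2) (half_pos hδ)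
  refine eventually_cofinite.2 (F.finite_toSet.subset fun g hg => ?_)
  by_contra hgF
  exact hg ((hF g hgF).trans_lt (half_lt_self hδ))

theorem IsMixing.measure_singleton [Infinite G] [IsFiniteMeasure μ] [MeasurableSingletonClass X]
    (hmix : IsMixing G μ) (hfree : ∀ g : G, g ≠ 1 → μ {x | g • x = x} = 0) (x : X) :
    μ {x} = 0 := by
  by_contra hx
  have hpos : 0 < μ.real {x} * μ.real {x} := by
    have : 0 < μ.real {x} := ENNReal.toReal_pos hx (measure_ne_top μ _)
    positivity
  have hmixx := hmix _ _ (measurableSet_singleton x) (measurableSet_singleton x)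
  obtain ⟨g, hg, hg1⟩ :=
    ((hmixx.eventually (lt_mem_nhds hpos)).and (eventually_cofinite_ne 1)).exists
  have hfix : x ∈ {y | g • y = y} := by
    by_contra h
    simp [smul_set_singleton, Ne.symm h] at hg
  exact hx (measure_mono_null (singleton_subset_iff.2 hfix) (hfree g hg1))

end Mixing

section Fibers

variable {G X α : Type*} [Group G] [MulAction G X] [MeasurableSpace X] {μ : Measure X}
  [IsFiniteMeasure μ] [Fintype α] {π : X → α}

theorem sum_measureReal_fiber_inter_smul_fiber [MeasurableConstSMul G X]
    (hπ : ∀ c, MeasurableSet (π ⁻¹' {c})) (g : G) :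
    ∑ c, μ.real (π ⁻¹' {c} ∩ g • π ⁻¹' {c}) = μ.real {x | π (g⁻¹ • x) = π x} := by
  rw [← measureReal_iUnion_fintype
    (fun c d hcd =>
      ((disjoint_singleton.2 hcd).preimage π).mono inter_subset_left inter_subset_left)
    (fun c => (hπ c).inter ((hπ c).const_smul g))]
  congr 1
  ext x
  simp [mem_smul_set_iff_inv_smul_mem, eq_comm]

theorem measureReal_prod_setOf_eq {ν : Measure X} [IsFiniteMeasure ν]
    (hπ : ∀ c, MeasurableSet (π ⁻¹' {c})) :
    (μ.prod ν).real {p : X × X | π p.1 = π p.2} =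
      ∑ c, μ.real (π ⁻¹' {c}) * ν.real (π ⁻¹' {c}) := by
  simp_rw [← measureReal_prod_prod]
  rw [← measureReal_iUnion_fintype
    (fun c d hcd => Disjoint.set_prod_left ((disjoint_singleton.2 hcd).preimage π) _ _)
    (fun c => (hπ c).prod (hπ c))]
  congr 1
  ext p
  simp [eq_comm]

theorem IsMixing.tendsto_sum_measureReal_fiber_inter_smul_fiber (hmix : IsMixing G μ)
    (hπ : ∀ c, MeasurableSet (π ⁻¹' {c})) :
    Tendsto (fun g : G => ∑ c, μ.real (π ⁻¹' {c} ∩ g • π ⁻¹' {c})) cofinite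
      (𝓝 ((μ.prod μ).real {p : X × X | π p.1 = π p.2})) := by
  rw [measureReal_prod_setOf_eq hπ]
  exact tendsto_finsetSum _ fun c _ => hmix _ _ (hπ c) (hπ c)

end Fibers

theorem measure_prod_setOf_fst_eq_snd {X : Type*} [MeasurableSpace X] [MeasurableEq X]
    (μ ν : Measure X) [SFinite ν] [NullSingletonClass ν] :
    μ.prod ν {p : X × X | p.1 = p.2} = 0 := by
  refine (Measure.measure_prod_null measurableSet_diagonal).2 ?_
  filter_upwards with x
  simp [Set.preimage]

section Patterns

variable {X Y : Type*} {E : ℕ → Set X}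

open Classical in
def membershipPattern (E : ℕ → Set X) (n : ℕ) (x : X) : Fin n → Bool :=
  fun k => decide (x ∈ E k)

theorem membershipPattern_eq_iff {n : ℕ} {x y : X} :
    membershipPattern E n x = membershipPattern E n y ↔ ∀ k : Fin n, (x ∈ E k ↔ y ∈ E k) := by
  simp [membershipPattern, funext_iff]

theorem measurable_membershipPattern [MeasurableSpace X] (hE : ∀ k, MeasurableSet (E k))
    (n : ℕ) : Measurable (membershipPattern E n) :=
  measurable_pi_lambda _ fun k =>
    measurable_to_bool (by simpa [membershipPattern, Set.preimage] using hE k)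

theorem antitone_setOf_membershipPattern_eq (f g : Y → X) :
    Antitone fun n => {y | membershipPattern E n (f y) = membershipPattern E n (g y)} :=
  fun _ _ hmn _ hy => membershipPattern_eq_iff.2 fun k =>
    membershipPattern_eq_iff.1 hy (Fin.castLE hmn k)

theorem iInter_setOf_membershipPattern_eq (hsep : ∀ x y, (∀ k, x ∈ E k ↔ y ∈ E k) → x = y)
    (f g : Y → X) :
    ⋂ n, {y | membershipPattern E n (f y) = membershipPattern E n (g y)} = {y | f y = g y} := by
  ext y
  simp only [mem_iInter, mem_ofPred_eq, membershipPattern_eq_iff]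
  refine ⟨fun h => hsep _ _ fun k => h (k + 1) ⟨k, k.lt_succ_self⟩, fun h n k => by rw [h]⟩

theorem tendsto_measureReal_setOf_membershipPattern_eq [MeasurableSpace X] [MeasurableSpace Y]
    (ν : Measure Y) [IsFiniteMeasure ν] (hE : ∀ k, MeasurableSet (E k))
    (hsep : ∀ x y, (∀ k, x ∈ E k ↔ y ∈ E k) → x = y) {f g : Y → X}
    (hf : Measurable f) (hg : Measurable g) :
    Tendsto (fun n => ν.real {y | membershipPattern E n (f y) = membershipPattern E n (g y)})
      atTop (𝓝 (ν.real {y | f y = g y})) := by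
  have h : Tendsto (fun n => ν {y | membershipPattern E n (f y) = membershipPattern E n (g y)})
      atTop (𝓝 (ν (⋂ n, {y | membershipPattern E n (f y) = membershipPattern E n (g y)}))) :=
    tendsto_measure_iInter_atTop
      (fun n => (measurableSet_eq_fun ((measurable_membershipPattern hE n).comp hf)
        ((measurable_membershipPattern hE n).comp hg)).nullMeasurableSet)
      (antitone_setOf_membershipPattern_eq f g) ⟨0, measure_ne_top ν _⟩
  rw [iInter_setOf_membershipPattern_eq hsep] at h
  exact (ENNReal.tendsto_toReal (measure_ne_top ν _)).comp h

end Patterns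

theorem IsMixing.exists_measurable_sum_measureReal_fiber_inter_smul_fiber_le {G X : Type*}
    [Group G] [Infinite G] [MulAction G X] [MeasurableSpace X] [StandardBorelSpace X]
    [MeasurableConstSMul G X] {μ : Measure X} [IsFiniteMeasure μ] (hmix : IsMixing G μ)
    (hfree : ∀ g : G, g ≠ 1 → μ {x | g • x = x} = 0) {ε : ℝ} (hε : 0 < ε) :
    ∃ (n : ℕ) (π : X → Fin n → Bool), Measurable π ∧
      ∀ g : G, g ≠ 1 → ∑ c, μ.real (π ⁻¹' {c} ∩ g • π ⁻¹' {c}) ≤ ε := by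
  obtain ⟨E, hE, hsep⟩ := exists_seq_separating X MeasurableSet.empty univ
  replace hsep : ∀ x y, (∀ k, x ∈ E k ↔ y ∈ E k) → x = y := fun x y => hsep x trivial y trivial
  have : NullSingletonClass μ := ⟨hmix.measure_singleton hfree⟩
  set π := membershipPattern E
  have hπ (n : ℕ) (c : Fin n → Bool) : MeasurableSet (π n ⁻¹' {c}) :=
    measurable_membershipPattern hE n (measurableSet_singleton c)
  set overlap : ℕ → G → ℝ := fun n g => ∑ c, μ.real (π n ⁻¹' {c} ∩ g • π n ⁻¹' {c})
  have hoverlap (n : ℕ) (g : G) : overlap n g = μ.real {x | π n (g⁻¹ • x) = π n x} :=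
    sum_measureReal_fiber_inter_smul_fiber (hπ n) g
  obtain ⟨n₀, hn₀⟩ : ∃ n₀, (μ.prod μ).real {p : X × X | π n₀ p.1 = π n₀ p.2} < ε := by
    have h := tendsto_measureReal_setOf_membershipPattern_eq (μ.prod μ) hE hsep
      measurable_fst measurable_snd
    rw [measureReal_def, measure_prod_setOf_fst_eq_snd, ENNReal.toReal_zero] at h
    exact (h.eventually (gt_mem_nhds hε)).exists
  have hbad : {g : G | ε ≤ overlap n₀ g}.Finite := by
    simpa only [not_lt] using eventually_cofinite.1
      ((hmix.tendsto_sum_measureReal_fiber_inter_smul_fiber (hπ n₀)).eventually (gt_mem_nhds hn₀))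
  have hfine : ∀ᶠ n in atTop, ∀ g ∈ {g : G | ε ≤ overlap n₀ g}, g ≠ 1 → overlap n g ≤ ε := by
    refine (eventually_all_finite hbad).2 fun g _ => ?_
    rcases eq_or_ne g 1 with rfl | hg
    · exact .of_forall fun _ h => absurd rfl h
    have h := tendsto_measureReal_setOf_membershipPattern_eq μ hE hsep
      (measurable_const_smul g⁻¹) measurable_id'
    rw [measureReal_def, hfree g⁻¹ (inv_ne_one.2 hg), ENNReal.toReal_zero] at h
    filter_upwards [h.eventually (Iic_mem_nhds hε)] with n hn _
    rw [hoverlap]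
    exact hn
  obtain ⟨N, hN, hN₀⟩ := (hfine.and (eventually_ge_atTop n₀)).exists
  refine ⟨N, π N, measurable_membershipPattern hE N, fun g hg => ?_⟩
  by_cases hgbad : ε ≤ overlap n₀ g
  · exact hN g hgbad hg
  calc overlap N g = μ.real {x | π N (g⁻¹ • x) = π N x} := hoverlap N g
    _ ≤ μ.real {x | π n₀ (g⁻¹ • x) = π n₀ x} :=
      measureReal_mono (antitone_setOf_membershipPattern_eq _ _ hN₀)
    _ = overlap n₀ g := (hoverlap n₀ g).symm
    _ ≤ ε := (not_le.1 hgbad).le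

theorem free_mixing_partition_general
    {G : Type} [Group G] [Infinite G]
    {X : Type} [MeasurableSpace X] [StandardBorelSpace X]
    (μ : Measure X) [IsProbabilityMeasure μ]
    (a : G → X → X)
    (hmeas : ∀ g, Measurable (a g))
    (hone : ∀ x, a 1 x = x) (hmul : ∀ g h x, a (g * h) x = a g (a h x))
    (hfree : ∀ g : G, g ≠ 1 → μ {x | a g x = x} = 0)
    (hmix : ∀ A B : Set X, MeasurableSet A → MeasurableSet B →
      ∀ δ : ℝ, 0 < δ → ∃ F : Finset G, ∀ g : G, g ∉ F →
        |(μ (A ∩ a g '' B)).toReal - (μ A).toReal * (μ B).toReal| ≤ δ)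
    (ε : ℝ) (hε : 0 < ε) :
    ∃ (n : ℕ) (Q : Fin n → Set X), 1 ≤ n ∧
      (∀ k, MeasurableSet (Q k)) ∧
      (Pairwise fun k l => Disjoint (Q k) (Q l)) ∧
      (⋃ k, Q k) = Set.univ ∧
      ∀ g : G, g ≠ 1 → ∑ k, (μ (Q k ∩ a g '' Q k)).toReal ≤ ε := by
  -- `g • x` unfolds to `a g x`, so the hypotheses on `a` apply verbatim to this action.
  let _ : MulAction G X := { smul := a, one_smul := hone, mul_smul := hmul }
  have : MeasurableConstSMul G X := ⟨hmeas⟩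
  obtain ⟨m, π, hπ, hsmall⟩ := (isMixing_of_forall_exists_finset hmix :
    IsMixing G μ).exists_measurable_sum_measureReal_fiber_inter_smul_fiber_le hfree hε
  let e := Fintype.equivFin (Fin m → Bool)
  refine ⟨_, fun k => π ⁻¹' {e.symm k}, Fintype.card_pos, fun k => hπ (measurableSet_singleton _),
    fun k l hkl => (disjoint_singleton.2 (e.symm.injective.ne hkl)).preimage π,
    iUnion_eq_univ_iff.2 fun x => ⟨e (π x), by simp⟩, fun g hg => ?_⟩
  exact (e.symm.sum_comp fun c => μ.real (π ⁻¹' {c} ∩ g • π ⁻¹' {c})).trans_le (hsmall g hg)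

/-- **Small-intersection partitions for free mixing actions.**
Let `G` be a countably infinite group with an essentially free mixing measure-preserving
action on a standard probability space `(X,μ)`.  For every `ε > 0` there is a finite
measurable partition `X = Q₁ ⊔ ⋯ ⊔ Q_n` such that
`∑ₖ μ(Q_k ∩ g•Q_k) ≤ ε` for every `g ≠ e`. -/
theorem free_mixing_partition
    {G : Type} [Group G] [Countable G] [Infinite G]
    {X : Type} [MeasurableSpace X] [StandardBorelSpace X]
    (μ : Measure X) [IsProbabilityMeasure μ]
    (a : G → X → X)
    (hmeas : ∀ g, Measurable (a g)) (hmp : ∀ g, MeasurePreserving (a g) μ μ)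
    (hone : ∀ x, a 1 x = x) (hmul : ∀ g h x, a (g * h) x = a g (a h x))
    (hfree : ∀ g : G, g ≠ 1 → μ {x | a g x = x} = 0)
    (hmix : ∀ A B : Set X, MeasurableSet A → MeasurableSet B →
      ∀ δ : ℝ, 0 < δ → ∃ F : Finset G, ∀ g : G, g ∉ F →
        |(μ (A ∩ a g '' B)).toReal - (μ A).toReal * (μ B).toReal| ≤ δ)
    (ε : ℝ) (hε : 0 < ε) :
    ∃ (n : ℕ) (Q : Fin n → Set X), 1 ≤ n ∧
      (∀ k, MeasurableSet (Q k)) ∧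
      (Pairwise fun k l => Disjoint (Q k) (Q l)) ∧
      (⋃ k, Q k) = Set.univ ∧
      ∀ g : G, g ≠ 1 → ∑ k, (μ (Q k ∩ a g '' Q k)).toReal ≤ ε :=
  free_mixing_partition_general μ a hmeas hone hmul hfree hmix ε hε
end
end

section
/- Let G and Γ be countable groups with essentially free ergodic measure-preserving actions on standard probability spaces (X,μ) and (Y,η) respectively. If π₁ : A₁ → B₁ and π₂ : A₂ → B₂ are stable orbit equivalences between these actions that define the same stable orbit equivalence, then their compression constants agree: η(B₁)/μ(A₁) = η(B₂)/μ(A₂). -/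
/-!
By ergodicity of the `G`-action, some `g` moves a set `E ⊆ A₁` of positive measure into `A₂`.
A stable orbit equivalence `π : A → B` multiplies the measure of subsets of `A` by `η B / μ A`,
so it suffices to see that `π₁ '' E` and `π₂ '' (g • E)` have the same measure. Because the two
equivalences define the same one, `π₂ (g • x)` lies in the `Γ`-orbit of `π₁ x`; cutting `E` into
countably many pieces on which `π₂ ∘ g = aY s ∘ π₁` for a fixed `s`, injectivity and invariance
of `η` give the equality piece by piece.
-/

open MeasureTheory

noncomputable section

/-- `π : A → B` is a stable orbit equivalence between the action `aX` of `G` on `(X,μ)` and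
the action `aY` of `Γ` on `(Y,η)`: it is a measurable bijection modulo null sets, pushing
the normalized restricted measure on `A` forward to the one on `B`, and sending
`A ∩ G•x` onto `B ∩ Γ•π(x)` for a.e. `x ∈ A`. -/
def IsStableOE {G Γ X Y : Type*} [Group G] [Group Γ] [MeasurableSpace X] [MeasurableSpace Y]
    (μ : Measure X) (η : Measure Y) (aX : G → X → X) (aY : Γ → Y → Y)
    (A : Set X) (B : Set Y) (π : X → Y) : Prop :=
  MeasurableSet A ∧ MeasurableSet B ∧ 0 < μ A ∧ 0 < η B ∧
  Measurable π ∧ (∀ᵐ x ∂μ.restrict A, π x ∈ B) ∧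
  Measure.map π ((μ A)⁻¹ • μ.restrict A) = (η B)⁻¹ • η.restrict B ∧
  (∃ σ : Y → X, Measurable σ ∧ (∀ᵐ x ∂μ.restrict A, σ (π x) = x) ∧
    (∀ᵐ y ∂η.restrict B, π (σ y) = y)) ∧
  (∀ᵐ x ∂μ.restrict A,
    π '' (A ∩ Set.range fun g : G => aX g x) = B ∩ Set.range fun s : Γ => aY s (π x))

open Set Function

theorem MeasureTheory.MeasurePreserving.measure_image_emb {α β : Type*} [MeasurableSpace α]
    [MeasurableSpace β] {μa : Measure α} {μb : Measure β} {f : α → β}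
    (hf : MeasurePreserving f μa μb) (hfe : MeasurableEmbedding f) (s : Set α) :
    μb (f '' s) = μa s := by
  rw [← hf.measure_preimage_emb hfe, preimage_image_eq s hfe.injective]

section Action

variable {G X : Type*} [Group G] [MeasurableSpace X] {a : G → X → X}

theorem measurableEmbedding_of_action (hmeas : ∀ g, Measurable (a g))
    (hone : ∀ x, a 1 x = x) (hmul : ∀ g h x, a (g * h) x = a g (a h x)) (g : G) :
    MeasurableEmbedding (a g) :=
  have hsurj : Surjective (a g) := fun x => ⟨a g⁻¹ x, by rw [← hmul, mul_inv_cancel, hone]⟩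
  .of_measurable_inverse (hmeas g) (hsurj.range_eq ▸ .univ) (hmeas g⁻¹) fun x => by
    rw [← hmul, inv_mul_cancel, hone]

theorem exists_measure_inter_preimage_ne_zero [Countable G] {μ : Measure X}
    (hmeas : ∀ g, Measurable (a g)) (hone : ∀ x, a 1 x = x)
    (hmul : ∀ g h x, a (g * h) x = a g (a h x))
    (herg : ∀ S : Set X, MeasurableSet S →
      (∀ g : G, μ (symmDiff S (a g ⁻¹' S)) = 0) → μ S = 0 ∨ μ Sᶜ = 0)
    {S T : Set X} (hS : μ S ≠ 0) (hT : MeasurableSet T) (hT0 : μ T ≠ 0) :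
    ∃ g, μ (S ∩ a g ⁻¹' T) ≠ 0 := by
  by_contra! hnull
  set W := ⋃ g, a g ⁻¹' T
  have hinv (g : G) : a g ⁻¹' W = W := by
    simp only [W, preimage_iUnion, ← preimage_comp]
    calc ⋃ h, (a h ∘ a g) ⁻¹' T = ⋃ h, a (h * g) ⁻¹' T :=
          iUnion_congr fun h => congrArg (· ⁻¹' T) (funext (hmul h g ·)).symm
      _ = W := (mul_right_surjective g).iUnion_comp fun h => a h ⁻¹' T
  have hSW : S ⊆ (⋃ g, S ∩ a g ⁻¹' T) ∪ Wᶜ := fun x hx => by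
    by_cases hxW : x ∈ W
    · obtain ⟨g, hg⟩ := mem_iUnion.1 hxW
      exact Or.inl (mem_iUnion.2 ⟨g, hx, hg⟩)
    · exact Or.inr hxW
  rcases herg W (.iUnion fun g => hmeas g hT) fun g => by simp [hinv g] with hW | hW
  · exact hT0 (measure_mono_null (fun x hx => mem_iUnion.2 ⟨1, by simpa [hone]⟩) hW)
  · exact hS (measure_mono_null hSW (measure_union_null (measure_iUnion_null hnull) hW))

end Action

section Orbit

variable {X Y : Type*} [MeasurableSpace X] [StandardBorelSpace X] [MeasurableSpace Y]
  [MeasurableSpace.CountablySeparated Y] {η : Measure Y}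

theorem measure_image_iUnion_of_injOn {ι : Type*} [Countable ι] {f : X → Y} (hf : Measurable f)
    {P : ι → Set X} (hP : ∀ i, MeasurableSet (P i)) (hdisj : Pairwise (Disjoint on P))
    (hinj : InjOn f (⋃ i, P i)) :
    η (f '' ⋃ i, P i) = ∑' i, η (f '' P i) := by
  rw [image_iUnion]
  exact measure_iUnion
    (fun i j hij => (hdisj hij).image hinj (subset_iUnion P i) (subset_iUnion P j))
    fun i => (hP i).image_of_measurable_injOn hf (hinj.mono (subset_iUnion P i))

theorem measure_image_eq_of_forall_exists_eq_comp [MeasurableEq Y] {T : ℕ → Y → Y}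
    (hT : ∀ n, MeasurePreserving (T n) η η) (hTe : ∀ n, MeasurableEmbedding (T n))
    {p q : X → Y} (hp : Measurable p) (hq : Measurable q) {E : Set X} (hE : MeasurableSet E)
    (hpinj : InjOn p E) (hqinj : InjOn q E) (hcover : ∀ x ∈ E, ∃ n, q x = T n (p x)) :
    η (q '' E) = η (p '' E) := by
  set P := disjointed fun n => E ∩ {x | q x = T n (p x)}
  have hPm (n : ℕ) : MeasurableSet (P n) :=
    .disjointed (fun n => hE.inter (measurableSet_eq_fun hq ((hTe n).measurable.comp hp))) n
  have hPE (n : ℕ) : P n ⊆ E ∩ {x | q x = T n (p x)} := disjointed_subset _ n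
  have hE_eq : E = ⋃ n, P n := by
    rw [iUnion_disjointed, ← inter_iUnion]
    exact (inter_eq_left.2 fun x hx => mem_iUnion.2 (hcover x hx)).symm
  have hpiece (n : ℕ) : η (q '' P n) = η (p '' P n) := by
    rw [image_congr fun x hx => (hPE n hx).2, ← image_image, (hT n).measure_image_emb (hTe n)]
  rw [hE_eq] at hpinj hqinj ⊢
  rw [measure_image_iUnion_of_injOn hp hPm (disjoint_disjointed _) hpinj,
    measure_image_iUnion_of_injOn hq hPm (disjoint_disjointed _) hqinj]
  exact tsum_congr hpiece

theorem measure_image_eq_of_mem_orbit [MeasurableEq Y] {Γ : Type*} [Group Γ] [Countable Γ]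
    {aY : Γ → Y → Y} (hmeas : ∀ s, Measurable (aY s)) (hmp : ∀ s, MeasurePreserving (aY s) η η)
    (hone : ∀ y, aY 1 y = y) (hmul : ∀ s t y, aY (s * t) y = aY s (aY t y))
    {p q : X → Y} (hp : Measurable p) (hq : Measurable q) {E : Set X} (hE : MeasurableSet E)
    (hpinj : InjOn p E) (hqinj : InjOn q E)
    (horbit : ∀ x ∈ E, q x ∈ range fun s => aY s (p x)) :
    η (q '' E) = η (p '' E) := by
  obtain ⟨e, he⟩ := exists_surjective_nat Γ
  refine measure_image_eq_of_forall_exists_eq_comp (fun n => hmp (e n))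
    (fun n => measurableEmbedding_of_action hmeas hone hmul (e n)) hp hq hE hpinj hqinj
    fun x hx => ?_
  obtain ⟨s, hs⟩ := horbit x hx
  obtain ⟨n, rfl⟩ := he s
  exact ⟨n, hs.symm⟩

end Orbit

theorem IsStableOE.exists_subset_injOn {G Γ X Y : Type*} [Group G] [Group Γ]
    [MeasurableSpace X] [StandardBorelSpace X] [MeasurableSpace Y]
    [MeasurableSpace.CountablySeparated Y] {μ : Measure X} {η : Measure Y} [IsFiniteMeasure η]
    {aX : G → X → X} {aY : Γ → Y → Y} {A : Set X} {B : Set Y} {π : X → Y}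
    (h : IsStableOE μ η aX aY A B π) {P : X → Prop} (hP : ∀ᵐ x ∂μ.restrict A, P x) :
    ∃ A' ⊆ A, MeasurableSet A' ∧ μ A' = μ A ∧ (∀ x ∈ A', P x) ∧ InjOn π A' ∧
      ∀ E ⊆ A', MeasurableSet E → η (π '' E) = η B / μ A * μ E := by
  obtain ⟨hA, -, -, hB, hπ, hπB, hmap, ⟨σ, -, hσ, -⟩, -⟩ := h
  obtain ⟨s, hs, hsm, hgood⟩ := (hπB.and (hσ.and hP)).exists_measurable_mem
  have hinj : InjOn π (A ∩ s) := fun x hx y hy hxy => by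
    rw [← (hgood x hx.2).2.1, ← (hgood y hy.2).2.1, hxy]
  refine ⟨A ∩ s, inter_subset_left, hA.inter hsm, ?_, fun x hx => (hgood x hx.2).2.2, hinj,
    fun E hEs hE => ?_⟩
  · refine measure_inter_conull' ?_
    rw [sdiff_eq, inter_comm, ← Measure.restrict_apply' hA]
    exact mem_ae_iff.1 hs
  have himage : MeasurableSet (π '' E) := hE.image_of_measurable_injOn hπ (hinj.mono hEs)
  have hpre : π ⁻¹' (π '' E) =ᵐ[μ.restrict A] E := by
    filter_upwards [ae_restrict_mem hA, hs] with x hxA hxs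
    exact propext ⟨fun ⟨e, he, hπe⟩ => hinj (hEs he) ⟨hxA, hxs⟩ hπe ▸ he, fun hx => ⟨x, hx, rfl⟩⟩
  have key := congrArg (· (π '' E)) hmap
  simp only [Measure.map_apply hπ himage, Measure.smul_apply, smul_eq_mul, measure_congr hpre,
    Measure.restrict_apply hE, Measure.restrict_apply himage,
    inter_eq_left.2 (hEs.trans inter_subset_left),
    inter_eq_left.2 (image_subset_iff.2 fun x hx => (hgood x (hEs hx).2).1)] at key
  rw [div_eq_mul_inv, mul_assoc, key, ENNReal.mul_inv_cancel_left hB.ne' (measure_ne_top η B)]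

theorem same_SOE_equal_compression_general
    {G Γ : Type} [Group G] [Countable G] [Group Γ] [Countable Γ]
    {X Y : Type} [MeasurableSpace X] [StandardBorelSpace X]
    [MeasurableSpace Y] [StandardBorelSpace Y]
    (μ : Measure X) [IsProbabilityMeasure μ] (η : Measure Y) [IsProbabilityMeasure η]
    (aX : G → X → X) (aY : Γ → Y → Y)
    (hXmeas : ∀ g, Measurable (aX g)) (hXmp : ∀ g, MeasurePreserving (aX g) μ μ)
    (hXone : ∀ x, aX 1 x = x) (hXmul : ∀ g h x, aX (g * h) x = aX g (aX h x))
    (hXerg : ∀ S : Set X, MeasurableSet S →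
      (∀ g : G, μ (symmDiff S (aX g ⁻¹' S)) = 0) → μ S = 0 ∨ μ Sᶜ = 0)
    (hYmeas : ∀ s, Measurable (aY s)) (hYmp : ∀ s, MeasurePreserving (aY s) η η)
    (hYone : ∀ y, aY 1 y = y) (hYmul : ∀ s t y, aY (s * t) y = aY s (aY t y))
    (A₁ A₂ : Set X) (B₁ B₂ : Set Y) (π₁ π₂ : X → Y)
    (h₁ : IsStableOE μ η aX aY A₁ B₁ π₁)
    (h₂ : IsStableOE μ η aX aY A₂ B₂ π₂)
    (hsame : ∀ᵐ x ∂μ.restrict A₁,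
      π₂ '' (A₂ ∩ Set.range fun g : G => aX g x) ⊆ Set.range fun s : Γ => aY s (π₁ x)) :
    η B₁ / μ A₁ = η B₂ / μ A₂ := by
  obtain ⟨A₁', -, hA₁', hμA₁', hsame', hinj₁, himage₁⟩ := h₁.exists_subset_injOn hsame
  obtain ⟨A₂', hA₂'A₂, hA₂', hμA₂', -, hinj₂, himage₂⟩ :=
    h₂.exists_subset_injOn (P := fun _ => True) (.of_forall fun _ => trivial)
  obtain ⟨-, -, hA₁pos, -, hπ₁, -⟩ := h₁
  obtain ⟨-, -, hA₂pos, -, hπ₂, -⟩ := h₂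
  obtain ⟨g, hE⟩ := exists_measure_inter_preimage_ne_zero hXmeas hXone hXmul hXerg
    (hμA₁'.trans_ne hA₁pos.ne') hA₂' (hμA₂'.trans_ne hA₂pos.ne')
  set E := A₁' ∩ aX g ⁻¹' A₂'
  have hEm : MeasurableSet E := hA₁'.inter (hXmeas g hA₂')
  have hgE : aX g '' E ⊆ A₂' := image_subset_iff.2 inter_subset_right
  have hembed := measurableEmbedding_of_action hXmeas hXone hXmul g
  have horbit : η (π₂ '' (aX g '' E)) = η (π₁ '' E) := by
    rw [image_image]
    refine measure_image_eq_of_mem_orbit hYmeas hYmp hYone hYmul hπ₁ (hπ₂.comp (hXmeas g)) hEm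
      (hinj₁.mono inter_subset_left)
      ((hinj₂.mono hgE).comp hembed.injective.injOn (mapsTo_image _ _)) fun x hx => ?_
    exact hsame' x hx.1 ⟨aX g x, ⟨hA₂'A₂ hx.2, g, rfl⟩, rfl⟩
  have hcompare : η B₁ / μ A₁ * μ E = η B₂ / μ A₂ * μ E := by
    rw [← himage₁ E inter_subset_left hEm, ← horbit,
      himage₂ _ hgE (hembed.measurableSet_image.2 hEm), (hXmp g).measure_image_emb hembed]
  exact (ENNReal.mul_left_inj hE (measure_ne_top μ E)).1 hcompare

/-- **Stable orbit equivalences defining the same equivalence have equal compression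
constants.** -/
theorem same_SOE_equal_compression
    {G Γ : Type} [Group G] [Countable G] [Group Γ] [Countable Γ]
    {X Y : Type} [MeasurableSpace X] [StandardBorelSpace X]
    [MeasurableSpace Y] [StandardBorelSpace Y]
    (μ : Measure X) [IsProbabilityMeasure μ] (η : Measure Y) [IsProbabilityMeasure η]
    (aX : G → X → X) (aY : Γ → Y → Y)
    (hXmeas : ∀ g, Measurable (aX g)) (hXmp : ∀ g, MeasurePreserving (aX g) μ μ)
    (hXone : ∀ x, aX 1 x = x) (hXmul : ∀ g h x, aX (g * h) x = aX g (aX h x))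
    (hXfree : ∀ g : G, g ≠ 1 → μ {x | aX g x = x} = 0)
    (hXerg : ∀ S : Set X, MeasurableSet S →
      (∀ g : G, μ (symmDiff S (aX g ⁻¹' S)) = 0) → μ S = 0 ∨ μ Sᶜ = 0)
    (hYmeas : ∀ s, Measurable (aY s)) (hYmp : ∀ s, MeasurePreserving (aY s) η η)
    (hYone : ∀ y, aY 1 y = y) (hYmul : ∀ s t y, aY (s * t) y = aY s (aY t y))
    (hYfree : ∀ s : Γ, s ≠ 1 → η {y | aY s y = y} = 0)
    (hYerg : ∀ S : Set Y, MeasurableSet S →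
      (∀ s : Γ, η (symmDiff S (aY s ⁻¹' S)) = 0) → η S = 0 ∨ η Sᶜ = 0)
    (A₁ A₂ : Set X) (B₁ B₂ : Set Y) (π₁ π₂ : X → Y)
    (h₁ : IsStableOE μ η aX aY A₁ B₁ π₁)
    (h₂ : IsStableOE μ η aX aY A₂ B₂ π₂)
    (hsame : ∀ᵐ x ∂μ.restrict A₁,
      π₂ '' (A₂ ∩ Set.range fun g : G => aX g x) ⊆ Set.range fun s : Γ => aY s (π₁ x)) :
    η B₁ / μ A₁ = η B₂ / μ A₂ :=
  same_SOE_equal_compression_general μ η aX aY hXmeas hXmp hXone hXmul hXerg hYmeas hYmp hYone hYmul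
    A₁ A₂ B₁ B₂ π₁ π₂ h₁ h₂ hsame
end
end

section
/- Let G and Γ be countable groups with essentially free ergodic measure-preserving actions on standard probability spaces (X,μ) and (Y,η) respectively. Suppose π₁ : A₁ → B₁ and π₂ : A₂ → B₂ are stable orbit equivalences between these actions that define the same stable orbit equivalence, and that μ(A₁) ≤ μ(A₂). Then there exist φ in the full group of the G-action (a measure-preserving bijection φ : X → X modulo null sets with φ(x) ∈ G • x for a.e. x) and ψ in the full group of the Γ-action, such that φ(A₁) ⊆ A₂ up to null sets and π₁(x) = ψ(π₂(φ(x))) for a.e. x ∈ A₁. -/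
open MeasureTheory Function Set

noncomputable section

set_option linter.unusedSectionVars false
set_option maxHeartbeats 1000000

section ActAux

variable {G X : Type*} [Group G] [MeasurableSpace X]


variable {G X : Type*} [Group G] [MeasurableSpace X]

lemma act_inv_act {a : G → X → X} (hone : ∀ x, a 1 x = x)
    (hmul : ∀ g h x, a (g * h) x = a g (a h x)) (g : G) (x : X) :
    a g⁻¹ (a g x) = x := by
  rw [← hmul, inv_mul_cancel, hone]

lemma act_act_inv {a : G → X → X} (hone : ∀ x, a 1 x = x)
    (hmul : ∀ g h x, a (g * h) x = a g (a h x)) (g : G) (x : X) :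
    a g (a g⁻¹ x) = x := by
  rw [← hmul, mul_inv_cancel, hone]

lemma act_image_eq {a : G → X → X} (hone : ∀ x, a 1 x = x)
    (hmul : ∀ g h x, a (g * h) x = a g (a h x)) (g : G) (S : Set X) :
    a g '' S = a g⁻¹ ⁻¹' S := by
  ext y
  constructor
  · rintro ⟨x, hx, rfl⟩
    simpa [Set.mem_preimage, act_inv_act hone hmul] using hx
  · intro hy
    exact ⟨a g⁻¹ y, hy, act_act_inv hone hmul g y⟩

/-- Cumulative (domain, image) sets in the greedy exhaustion construction. -/
def cumDI (a : G → X → X) (f : ℕ → G) (A B : Set X) : ℕ → Set X × Set X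
  | 0 => (∅, ∅)
  | n + 1 =>
    let c := cumDI a f A B n
    let m := (A \ c.1) ∩ a (f n) ⁻¹' (B \ c.2)
    (c.1 ∪ m, c.2 ∪ a (f n)⁻¹ ⁻¹' m)

/-- The `n`-th piece in the greedy exhaustion construction. -/
def pieceM (a : G → X → X) (f : ℕ → G) (A B : Set X) (n : ℕ) : Set X :=
  (A \ (cumDI a f A B n).1) ∩ a (f n) ⁻¹' (B \ (cumDI a f A B n).2)

lemma cumDI_succ (a : G → X → X) (f : ℕ → G) (A B : Set X) (n : ℕ) :
    cumDI a f A B (n + 1) =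
      ((cumDI a f A B n).1 ∪ pieceM a f A B n,
       (cumDI a f A B n).2 ∪ a (f n)⁻¹ ⁻¹' pieceM a f A B n) := rfl

/-- The key exhaustion lemma: pieces of `A` moved disjointly into `B` by group elements,
covering `A` up to a null set (and `B` too, if the measures agree). -/
lemma exhaustion {G X : Type*} [Group G] [Countable G] [MeasurableSpace X]
    (μ : Measure X) [IsProbabilityMeasure μ] (a : G → X → X)
    (hmeas : ∀ g, Measurable (a g)) (hmp : ∀ g, MeasurePreserving (a g) μ μ)
    (hone : ∀ x, a 1 x = x) (hmul : ∀ g h x, a (g * h) x = a g (a h x))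
    (herg : ∀ S : Set X, MeasurableSet S →
      (∀ g : G, μ (symmDiff S (a g ⁻¹' S)) = 0) → μ S = 0 ∨ μ Sᶜ = 0)
    (A B : Set X) (hA : MeasurableSet A) (hB : MeasurableSet B) (hAB : μ A ≤ μ B) :
    ∃ (g : ℕ → G) (M : ℕ → Set X),
      (∀ n, MeasurableSet (M n)) ∧ (∀ n, M n ⊆ A) ∧
      Pairwise (Function.onFun Disjoint M) ∧
      (∀ n, a (g n) '' M n ⊆ B) ∧
      Pairwise (Function.onFun Disjoint fun n => a (g n) '' M n) ∧
      μ (A \ ⋃ n, M n) = 0 ∧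
      (μ A = μ B → μ (B \ ⋃ n, a (g n) '' M n) = 0) := by
  obtain ⟨f, hf⟩ := exists_surjective_nat G
  set M : ℕ → Set X := pieceM a f A B with hM
  set N : ℕ → Set X := fun n => a (f n)⁻¹ ⁻¹' M n with hN
  -- image description
  have himg : ∀ n, a (f n) '' M n = N n := fun n => act_image_eq hone hmul _ _
  -- cumulative sets are measurable and described by unions
  have hcum_meas : ∀ n, MeasurableSet (cumDI a f A B n).1 ∧ MeasurableSet (cumDI a f A B n).2 := by
    intro n
    induction n with
    | zero => simp [cumDI]
    | succ k ih =>
      rw [cumDI_succ]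
      have hMk : MeasurableSet (M k) :=
        ((hA.diff ih.1).inter ((hmeas (f k)) (hB.diff ih.2)))
      exact ⟨ih.1.union hMk, ih.2.union ((hmeas (f k)⁻¹) hMk)⟩
  have hMmeas : ∀ n, MeasurableSet (M n) := fun n =>
    (hA.diff (hcum_meas n).1).inter ((hmeas (f n)) (hB.diff (hcum_meas n).2))
  have hNmeas : ∀ n, MeasurableSet (N n) := fun n => (hmeas (f n)⁻¹) (hMmeas n)
  -- M n ⊆ A, N n ⊆ B, and pieces avoid / fill cumulative sets
  have hMA : ∀ n, M n ⊆ A \ (cumDI a f A B n).1 := fun n => Set.inter_subset_left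
  have hNB : ∀ n, N n ⊆ B \ (cumDI a f A B n).2 := by
    intro n y hy
    have : a (f n)⁻¹ y ∈ M n := hy
    have h2 := this.2
    have : a (f n) (a (f n)⁻¹ y) ∈ B \ (cumDI a f A B n).2 := h2
    rwa [act_act_inv hone hmul] at this
  -- monotonicity of cumulative sets
  have hcum_mono1 : ∀ {m n : ℕ}, m ≤ n → (cumDI a f A B m).1 ⊆ (cumDI a f A B n).1 := by
    intro m n h
    induction h with
    | refl => exact subset_rfl
    | step h ih => exact ih.trans (by rw [cumDI_succ]; exact Set.subset_union_left)
  have hcum_mono2 : ∀ {m n : ℕ}, m ≤ n → (cumDI a f A B m).2 ⊆ (cumDI a f A B n).2 := by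
    intro m n h
    induction h with
    | refl => exact subset_rfl
    | step h ih => exact ih.trans (by rw [cumDI_succ]; exact Set.subset_union_left)
  have hMsub_cum : ∀ {k n : ℕ}, k < n → M k ⊆ (cumDI a f A B n).1 := by
    intro k n hkn
    refine Set.Subset.trans ?_ (hcum_mono1 hkn)
    rw [cumDI_succ]; exact Set.subset_union_right
  have hNsub_cum : ∀ {k n : ℕ}, k < n → N k ⊆ (cumDI a f A B n).2 := by
    intro k n hkn
    refine Set.Subset.trans ?_ (hcum_mono2 hkn)
    rw [cumDI_succ]; exact Set.subset_union_right
  -- pairwise disjointness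
  have hMdisj : Pairwise (Function.onFun Disjoint M) := by
    intro i j hij
    wlog h : i < j generalizing i j
    · exact (this hij.symm (by omega)).symm
    · refine Set.disjoint_left.mpr fun x hxi hxj => ?_
      exact ((hMA j hxj).2 (hMsub_cum h hxi))
  have hNdisj : Pairwise (Function.onFun Disjoint N) := by
    intro i j hij
    wlog h : i < j generalizing i j
    · exact (this hij.symm (by omega)).symm
    · refine Set.disjoint_left.mpr fun y hyi hyj => ?_
      exact ((hNB j hyj).2 (hNsub_cum h hyi))
  -- cumulative sets within unions
  have hcum_sub1 : ∀ n, (cumDI a f A B n).1 ⊆ ⋃ k, M k := by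
    intro n
    induction n with
    | zero => simp [cumDI]
    | succ k ih =>
      rw [cumDI_succ]
      exact Set.union_subset ih (Set.subset_iUnion M k)
  have hcum_sub2 : ∀ n, (cumDI a f A B n).2 ⊆ ⋃ k, N k := by
    intro n
    induction n with
    | zero => simp [cumDI]
    | succ k ih =>
      rw [cumDI_succ]
      exact Set.union_subset ih (Set.subset_iUnion N k)
  -- leftovers
  set A' : Set X := A \ ⋃ n, M n with hA'
  set B' : Set X := B \ ⋃ n, N n with hB'
  have hA'meas : MeasurableSet A' := hA.diff (MeasurableSet.iUnion hMmeas)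
  have hB'meas : MeasurableSet B' := hB.diff (MeasurableSet.iUnion hNmeas)
  -- key greedy property: no group element maps a leftover point of A' into B'
  have hkey : ∀ g : G, A' ∩ a g ⁻¹' B' = ∅ := by
    intro g
    obtain ⟨n, rfl⟩ := hf g
    ext x
    simp only [Set.mem_inter_iff, Set.mem_preimage, Set.mem_empty_iff_false, iff_false]
    rintro ⟨hxA', hxB'⟩
    have hxMn : x ∈ M n := by
      refine ⟨⟨hxA'.1, fun hc => hxA'.2 (hcum_sub1 n hc)⟩, ?_⟩
      exact ⟨hxB'.1, fun hc => hxB'.2 (hcum_sub2 n hc)⟩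
    exact hxA'.2 (Set.mem_iUnion.mpr ⟨n, hxMn⟩)
  -- the saturation of B'
  set S : Set X := ⋃ g : G, a g ⁻¹' B' with hS
  have hSmeas : MeasurableSet S := MeasurableSet.iUnion fun g => (hmeas g) hB'meas
  have hSinv : ∀ h : G, a h ⁻¹' S = S := by
    intro h
    ext x
    simp only [hS, Set.mem_preimage, Set.mem_iUnion]
    constructor
    · rintro ⟨g, hg⟩
      exact ⟨g * h, by rwa [hmul]⟩
    · rintro ⟨g, hg⟩
      refine ⟨g * h⁻¹, ?_⟩
      rw [← hmul, mul_assoc, inv_mul_cancel, mul_one]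
      exact hg
  have hdichot := herg S hSmeas fun g => by rw [hSinv g, symmDiff_self]; simp
  have hB'S : B' ⊆ S := by
    intro y hy
    refine Set.mem_iUnion.mpr ⟨1, ?_⟩
    simpa [hone] using hy
  have hA'S : A' ∩ S = ∅ := by
    ext x
    simp only [Set.mem_inter_iff, Set.mem_empty_iff_false, iff_false]
    rintro ⟨hx, hxS⟩
    obtain ⟨g, hg⟩ := Set.mem_iUnion.mp hxS
    have := hkey g
    exact absurd (Set.mem_inter hx hg) (by rw [this]; exact fun h => h)
  -- measure computations
  have hμN : ∀ n, μ (N n) = μ (M n) := fun n =>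
    (hmp (f n)⁻¹).measure_preimage (hMmeas n).nullMeasurableSet
  have hμUN : μ (⋃ n, N n) = μ (⋃ n, M n) := by
    rw [measure_iUnion hNdisj hNmeas, measure_iUnion hMdisj hMmeas]
    exact tsum_congr hμN
  have hUM_meas : MeasurableSet (⋃ n, M n) := MeasurableSet.iUnion hMmeas
  have hUN_meas : MeasurableSet (⋃ n, N n) := MeasurableSet.iUnion hNmeas
  have hUM_sub : (⋃ n, M n) ⊆ A := Set.iUnion_subset fun n => (hMA n).trans Set.diff_subset
  have hUN_sub : (⋃ n, N n) ⊆ B := Set.iUnion_subset fun n => (hNB n).trans Set.diff_subset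
  have hμA' : μ A' = μ A - μ (⋃ n, M n) := measure_diff hUM_sub hUM_meas.nullMeasurableSet
    (measure_ne_top μ _)
  have hμB' : μ B' = μ B - μ (⋃ n, N n) := measure_diff hUN_sub hUN_meas.nullMeasurableSet
    (measure_ne_top μ _)
  have hfinal : μ A' = 0 ∧ (μ A = μ B → μ B' = 0) := by
    rcases hdichot with hS0 | hSc0
    · -- B' is null
      have hB'0 : μ B' = 0 := measure_mono_null hB'S hS0
      have hμB_eq : μ B = μ (⋃ n, N n) := by
        have h1 : μ B ≤ μ (⋃ n, N n) := by
          have hBsub : B ⊆ (⋃ n, N n) ∪ B' := by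
            intro x hx
            by_cases h : x ∈ ⋃ n, N n
            · exact Or.inl h
            · exact Or.inr ⟨hx, h⟩
          calc μ B ≤ μ ((⋃ n, N n) ∪ B') := measure_mono hBsub
            _ ≤ μ (⋃ n, N n) + μ B' := measure_union_le _ _
            _ = μ (⋃ n, N n) := by rw [hB'0, add_zero]
        exact le_antisymm h1 (measure_mono hUN_sub)
      have hμM_eq : μ (⋃ n, M n) = μ A := by
        refine le_antisymm (measure_mono hUM_sub) ?_
        calc μ A ≤ μ B := hAB
          _ = μ (⋃ n, N n) := hμB_eq
          _ = μ (⋃ n, M n) := hμUN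
      constructor
      · rw [hμA', hμM_eq, tsub_self]
      · intro _; exact hB'0
    · -- A' is null
      have hA'0 : μ A' = 0 := by
        refine measure_mono_null ?_ hSc0
        intro x hx
        intro hxS
        have : x ∈ A' ∩ S := ⟨hx, hxS⟩
        rw [hA'S] at this
        exact this
      refine ⟨hA'0, fun hABeq => ?_⟩
      have hμM_eq : μ (⋃ n, M n) = μ A := by
        refine le_antisymm (measure_mono hUM_sub) ?_
        have := hμA'
        rw [hA'0] at this
        exact tsub_eq_zero_iff_le.mp this.symm
      rw [hμB', ← hABeq, ← hμUN] at *
      rw [hμUN, hμM_eq, tsub_self]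
  refine ⟨f, M, hMmeas, fun n => (hMA n).trans Set.diff_subset, hMdisj, ?_, ?_, hfinal.1, ?_⟩
  · intro n
    rw [himg n]
    exact (hNB n).trans Set.diff_subset
  · intro i j hij
    rw [Function.onFun]  -- images equal N
    rw [himg i, himg j]
    exact hNdisj hij
  · intro hABeq
    have : (⋃ n, a (f n) '' M n) = ⋃ n, N n := by
      refine Set.iUnion_congr fun n => himg n
    rw [this]
    exact hfinal.2 hABeq

lemma measurableSet_eq_fun_std {α Z : Type*} [MeasurableSpace α] [MeasurableSpace Z]
    [StandardBorelSpace Z] {f g : α → Z} (hf : Measurable f) (hg : Measurable g) :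
    MeasurableSet {x | f x = g x} := by
  letI := upgradeStandardBorel Z
  exact MeasureTheory.StronglyMeasurable.measurableSet_eq_fun
    hf.stronglyMeasurable hg.stronglyMeasurable

lemma measure_eq_of_diff_null {X : Type*} [MeasurableSpace X] (μ : Measure X)
    {U A : Set X} (h : U ⊆ A) (h0 : μ (A \ U) = 0) : μ A = μ U := by
  refine le_antisymm ?_ (measure_mono h)
  calc μ A ≤ μ (U ∪ (A \ U)) := measure_mono (fun x hx => by
        by_cases hxU : x ∈ U
        exacts [Or.inl hxU, Or.inr ⟨hx, hxU⟩])
    _ ≤ μ U + μ (A \ U) := measure_union_le _ _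
    _ = μ U := by rw [h0, add_zero]

lemma pairwise_disjoint_sum_elim {α : Type*} {f g : ℕ → Set α}
    (hf : Pairwise (Function.onFun Disjoint f)) (hg : Pairwise (Function.onFun Disjoint g))
    (hfg : ∀ m n, Disjoint (f m) (g n)) :
    Pairwise (Function.onFun Disjoint (Sum.elim f g)) := by
  rintro (i | i) (j | j) hij
  · exact hf fun h => hij (congrArg Sum.inl h)
  · exact hfg i j
  · exact (hfg j i).symm
  · exact hg fun h => hij (congrArg Sum.inr h)

lemma measure_iUnion_image_eq {G X : Type*} [Group G] [MeasurableSpace X] {ι : Type*}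
    [Countable ι] (μ : Measure X) (a : G → X → X)
    (hmeas : ∀ g, Measurable (a g)) (hmp : ∀ g, MeasurePreserving (a g) μ μ)
    (hone : ∀ x, a 1 x = x) (hmul : ∀ g h x, a (g * h) x = a g (a h x))
    (g : ι → G) (M : ι → Set X) (hMm : ∀ i, MeasurableSet (M i))
    (hMd : Pairwise (Function.onFun Disjoint M))
    (hQd : Pairwise (Function.onFun Disjoint fun i => a (g i) '' M i)) :
    μ (⋃ i, a (g i) '' M i) = μ (⋃ i, M i) := by
  rw [measure_iUnion hQd (fun i => by
    rw [act_image_eq hone hmul]; exact (hmeas _) (hMm i)),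
    measure_iUnion hMd hMm]
  refine tsum_congr fun i => ?_
  rw [act_image_eq hone hmul]
  exact (hmp _).measure_preimage (hMm i).nullMeasurableSet
lemma assemble {G X : Type*} [Group G] [MeasurableSpace X] {ι : Type*} [Countable ι]
    (μ : Measure X) (a : G → X → X)
    (hmeas : ∀ g, Measurable (a g)) (hmp : ∀ g, MeasurePreserving (a g) μ μ)
    (hone : ∀ x, a 1 x = x) (hmul : ∀ g h x, a (g * h) x = a g (a h x))
    (g : ι → G) (P : ι → Set X) (hPm : ∀ i, MeasurableSet (P i))
    (hPd : Pairwise (Function.onFun Disjoint P))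
    (hQd : Pairwise (Function.onFun Disjoint fun i => a (g i) '' P i))
    (hPc : μ (⋃ i, P i)ᶜ = 0) (hQc : μ (⋃ i, a (g i) '' P i)ᶜ = 0) :
    ∃ φ φ' : X → X,
      Measurable φ ∧ Measurable φ' ∧ MeasurePreserving φ μ μ ∧
      (∀ x ∈ ⋃ i, P i, φ' (φ x) = x) ∧
      (∀ y ∈ ⋃ i, a (g i) '' P i, φ (φ' y) = y) ∧
      (∀ x, ∃ h : G, φ x = a h x) ∧
      (∀ i, ∀ x ∈ P i, φ x = a (g i) x) := by
  classical
  set Q : ι → Set X := fun i => a (g i) '' P i with hQ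
  have hQpre : ∀ i, Q i = a (g i)⁻¹ ⁻¹' P i := fun i => act_image_eq hone hmul _ _
  have hQm : ∀ i, MeasurableSet (Q i) := fun i => by
    rw [hQpre i]; exact (hmeas _) (hPm i)
  set φ : X → X := fun x => if h : ∃ i, x ∈ P i then a (g h.choose) x else x with hφ
  set φ' : X → X := fun y => if h : ∃ i, y ∈ Q i then a (g h.choose)⁻¹ y else y with hφ'
  have hspec : ∀ i, ∀ x ∈ P i, φ x = a (g i) x := by
    intro i x hx
    have hex : ∃ j, x ∈ P j := ⟨i, hx⟩
    have hch : hex.choose = i := by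
      by_contra hne
      exact Set.disjoint_left.mp (hPd hne) hex.choose_spec hx
    simp only [hφ, dif_pos hex, hch]
  have hspec' : ∀ i, ∀ y ∈ Q i, φ' y = a (g i)⁻¹ y := by
    intro i y hy
    have hex : ∃ j, y ∈ Q j := ⟨i, hy⟩
    have hch : hex.choose = i := by
      by_contra hne
      exact Set.disjoint_left.mp (hQd hne) hex.choose_spec hy
    simp only [hφ', dif_pos hex, hch]
  have hpre : ∀ E : Set X,
      φ ⁻¹' E = (⋃ i, P i ∩ a (g i) ⁻¹' E) ∪ ((⋃ i, P i)ᶜ ∩ E) := by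
    intro E
    ext x
    by_cases hx : ∃ i, x ∈ P i
    · obtain ⟨i, hi⟩ := hx
      have hφx : φ x = a (g i) x := hspec i x hi
      simp only [Set.mem_preimage, Set.mem_union, Set.mem_iUnion, Set.mem_inter_iff,
        Set.mem_compl_iff, hφx]
      constructor
      · intro hE
        exact Or.inl ⟨i, hi, hE⟩
      · rintro (⟨j, hj, hE⟩ | ⟨hc, _⟩)
        · have : j = i := by
            by_contra hne
            exact Set.disjoint_left.mp (hPd hne) hj hi
          rwa [this] at hE
        · exact absurd ⟨i, hi⟩ hc
    · have hφx : φ x = x := by simp only [hφ, dif_neg hx]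
      simp only [Set.mem_preimage, Set.mem_union, Set.mem_iUnion, Set.mem_inter_iff,
        Set.mem_compl_iff, hφx]
      constructor
      · intro hE
        exact Or.inr ⟨fun hc => hx hc, hE⟩
      · rintro (⟨j, hj, _⟩ | ⟨_, hE⟩)
        · exact absurd ⟨j, hj⟩ hx
        · exact hE
  have hpre' : ∀ E : Set X,
      φ' ⁻¹' E = (⋃ i, Q i ∩ a (g i)⁻¹ ⁻¹' E) ∪ ((⋃ i, Q i)ᶜ ∩ E) := by
    intro E
    ext y
    by_cases hy : ∃ i, y ∈ Q i
    · obtain ⟨i, hi⟩ := hy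
      have hφy : φ' y = a (g i)⁻¹ y := hspec' i y hi
      simp only [Set.mem_preimage, Set.mem_union, Set.mem_iUnion, Set.mem_inter_iff,
        Set.mem_compl_iff, hφy]
      constructor
      · intro hE
        exact Or.inl ⟨i, hi, hE⟩
      · rintro (⟨j, hj, hE⟩ | ⟨hc, _⟩)
        · have : j = i := by
            by_contra hne
            exact Set.disjoint_left.mp (hQd hne) hj hi
          rwa [this] at hE
        · exact absurd ⟨i, hi⟩ hc
    · have hφy : φ' y = y := by simp only [hφ', dif_neg hy]
      simp only [Set.mem_preimage, Set.mem_union, Set.mem_iUnion, Set.mem_inter_iff,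
        Set.mem_compl_iff, hφy]
      constructor
      · intro hE
        exact Or.inr ⟨fun hc => hy hc, hE⟩
      · rintro (⟨j, hj, _⟩ | ⟨_, hE⟩)
        · exact absurd ⟨j, hj⟩ hy
        · exact hE
  have hφm : Measurable φ := by
    intro E hE
    rw [hpre E]
    exact ((MeasurableSet.iUnion fun i => (hPm i).inter ((hmeas _) hE)).union
      (((MeasurableSet.iUnion hPm).compl).inter hE))
  have hφ'm : Measurable φ' := by
    intro E hE
    rw [hpre' E]
    exact ((MeasurableSet.iUnion fun i => (hQm i).inter ((hmeas _) hE)).union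
      (((MeasurableSet.iUnion hQm).compl).inter hE))
  have hφmp : MeasurePreserving φ μ μ := by
    refine ⟨hφm, ?_⟩
    refine Measure.ext fun E hE => ?_
    rw [Measure.map_apply hφm hE, hpre E]
    have h2 : μ ((⋃ i, P i)ᶜ ∩ E) = 0 := measure_mono_null Set.inter_subset_left hPc
    have hU : μ ((⋃ i, P i ∩ a (g i) ⁻¹' E) ∪ ((⋃ i, P i)ᶜ ∩ E))
        = μ (⋃ i, P i ∩ a (g i) ⁻¹' E) := by
      refine le_antisymm ?_ (measure_mono Set.subset_union_left)
      calc μ ((⋃ i, P i ∩ a (g i) ⁻¹' E) ∪ ((⋃ i, P i)ᶜ ∩ E))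
          ≤ μ (⋃ i, P i ∩ a (g i) ⁻¹' E) + μ ((⋃ i, P i)ᶜ ∩ E) := measure_union_le _ _
        _ = μ (⋃ i, P i ∩ a (g i) ⁻¹' E) := by rw [h2, add_zero]
    rw [hU]
    have hdisj : Pairwise (Function.onFun Disjoint fun i => P i ∩ a (g i) ⁻¹' E) :=
      fun i j hij => (hPd hij).mono Set.inter_subset_left Set.inter_subset_left
    rw [measure_iUnion hdisj fun i => (hPm i).inter ((hmeas _) hE)]
    have hterm : ∀ i, μ (P i ∩ a (g i) ⁻¹' E) = μ (Q i ∩ E) := by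
      intro i
      have h1 : Q i ∩ E = a (g i) '' (P i ∩ a (g i) ⁻¹' E) :=
        (Set.image_inter_preimage _ _ _).symm
      have h2' : a (g i) '' (P i ∩ a (g i) ⁻¹' E) = a (g i)⁻¹ ⁻¹' (P i ∩ a (g i) ⁻¹' E) :=
        act_image_eq hone hmul _ _
      rw [h1, h2']
      exact ((hmp (g i)⁻¹).measure_preimage
        ((hPm i).inter ((hmeas (g i)) hE)).nullMeasurableSet).symm
    rw [tsum_congr hterm]
    have hdisjQ : Pairwise (Function.onFun Disjoint fun i => Q i ∩ E) :=
      fun i j hij => (hQd hij).mono Set.inter_subset_left Set.inter_subset_left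
    rw [← measure_iUnion hdisjQ fun i => (hQm i).inter hE]
    have hUQ : (⋃ i, Q i ∩ E) = (⋃ i, Q i) ∩ E := by rw [Set.iUnion_inter]
    rw [hUQ]
    refine le_antisymm (measure_mono Set.inter_subset_right) ?_
    calc μ E ≤ μ (((⋃ i, Q i) ∩ E) ∪ (⋃ i, Q i)ᶜ) := by
          refine measure_mono fun x hx => ?_
          by_cases h : x ∈ ⋃ i, Q i
          · exact Or.inl ⟨h, hx⟩
          · exact Or.inr h
      _ ≤ μ ((⋃ i, Q i) ∩ E) + μ (⋃ i, Q i)ᶜ := measure_union_le _ _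
      _ = μ ((⋃ i, Q i) ∩ E) := by rw [hQc, add_zero]
  refine ⟨φ, φ', hφm, hφ'm, hφmp, ?_, ?_, ?_, hspec⟩
  · rintro x hx
    obtain ⟨i, hi⟩ := Set.mem_iUnion.mp hx
    have h1 : φ x = a (g i) x := hspec i x hi
    have h2 : a (g i) x ∈ Q i := Set.mem_image_of_mem _ hi
    rw [h1, hspec' i _ h2, act_inv_act hone hmul]
  · rintro y hy
    obtain ⟨i, hi⟩ := Set.mem_iUnion.mp hy
    obtain ⟨x, hx, rfl⟩ := hi
    have h1 : φ' (a (g i) x) = a (g i)⁻¹ (a (g i) x) :=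
      hspec' i _ (Set.mem_image_of_mem _ hx)
    rw [h1, act_inv_act hone hmul]
    exact hspec i x hx
  · intro x
    by_cases hx : ∃ i, x ∈ P i
    · exact ⟨g hx.choose, by simp only [hφ, dif_pos hx]⟩
    · exact ⟨1, by simp only [hφ, dif_neg hx, hone]⟩

end ActAux
/-- **Stable orbit equivalences defining the same equivalence differ by full group
elements.**  If `π₁, π₂` define the same stable orbit equivalence and `μ(A₁) ≤ μ(A₂)`, then
there are `φ` in the full group of the `G`-action and `ψ` in the full group of the
`Γ`-action with `φ(A₁) ⊆ A₂` (up to null sets) and `π₁ = ψ ∘ π₂ ∘ φ` a.e. on `A₁`. -/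
theorem same_SOE_full_group_correction
    {G Γ : Type} [Group G] [Countable G] [Group Γ] [Countable Γ]
    {X Y : Type} [MeasurableSpace X] [StandardBorelSpace X]
    [MeasurableSpace Y] [StandardBorelSpace Y]
    (μ : Measure X) [IsProbabilityMeasure μ] (η : Measure Y) [IsProbabilityMeasure η]
    (aX : G → X → X) (aY : Γ → Y → Y)
    (hXmeas : ∀ g, Measurable (aX g)) (hXmp : ∀ g, MeasurePreserving (aX g) μ μ)
    (hXone : ∀ x, aX 1 x = x) (hXmul : ∀ g h x, aX (g * h) x = aX g (aX h x))
    (hXfree : ∀ g : G, g ≠ 1 → μ {x | aX g x = x} = 0)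
    (hXerg : ∀ S : Set X, MeasurableSet S →
      (∀ g : G, μ (symmDiff S (aX g ⁻¹' S)) = 0) → μ S = 0 ∨ μ Sᶜ = 0)
    (hYmeas : ∀ s, Measurable (aY s)) (hYmp : ∀ s, MeasurePreserving (aY s) η η)
    (hYone : ∀ y, aY 1 y = y) (hYmul : ∀ s t y, aY (s * t) y = aY s (aY t y))
    (hYfree : ∀ s : Γ, s ≠ 1 → η {y | aY s y = y} = 0)
    (hYerg : ∀ S : Set Y, MeasurableSet S →
      (∀ s : Γ, η (symmDiff S (aY s ⁻¹' S)) = 0) → η S = 0 ∨ η Sᶜ = 0)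
    (A₁ A₂ : Set X) (B₁ B₂ : Set Y) (π₁ π₂ : X → Y)
    (h₁ : IsStableOE μ η aX aY A₁ B₁ π₁)
    (h₂ : IsStableOE μ η aX aY A₂ B₂ π₂)
    (hsame : ∀ᵐ x ∂μ.restrict A₁,
      π₂ '' (A₂ ∩ Set.range fun g : G => aX g x) ⊆ Set.range fun s : Γ => aY s (π₁ x))
    (hle : μ A₁ ≤ μ A₂) :
    ∃ (φ : X → X) (ψ : Y → Y),
      Measurable φ ∧ MeasurePreserving φ μ μ ∧
      (∃ φ' : X → X, Measurable φ' ∧ (∀ᵐ x ∂μ, φ' (φ x) = x) ∧ (∀ᵐ x ∂μ, φ (φ' x) = x)) ∧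
      (∀ᵐ x ∂μ, ∃ g : G, φ x = aX g x) ∧
      Measurable ψ ∧ MeasurePreserving ψ η η ∧
      (∃ ψ' : Y → Y, Measurable ψ' ∧ (∀ᵐ y ∂η, ψ' (ψ y) = y) ∧ (∀ᵐ y ∂η, ψ (ψ' y) = y)) ∧
      (∀ᵐ y ∂η, ∃ s : Γ, ψ y = aY s y) ∧
      (∀ᵐ x ∂μ.restrict A₁, φ x ∈ A₂) ∧
      (∀ᵐ x ∂μ.restrict A₁, π₁ x = ψ (π₂ (φ x))) := by
  classical
  obtain ⟨hA₁m, hB₁m, hA₁pos, hB₁pos, hπ₁m, hπ₁B, hπ₁map, ⟨σ₁, hσ₁m, hσ₁l, hσ₁r⟩, hπ₁orb⟩ := h₁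
  obtain ⟨hA₂m, hB₂m, hA₂pos, hB₂pos, hπ₂m, hπ₂B, hπ₂map, ⟨σ₂, hσ₂m, hσ₂l, hσ₂r⟩, hπ₂orb⟩ := h₂
  -- Step 1: a full-group element φ mapping A₁ into A₂ along orbits.
  obtain ⟨g1, M, hMm, hMA, hMd, hMimg, hMimgd, hMnull, -⟩ :=
    exhaustion μ aX hXmeas hXmp hXone hXmul hXerg A₁ A₂ hA₁m hA₂m hle
  set U : Set X := ⋃ n, M n with hU
  set V : Set X := ⋃ n, aX (g1 n) '' M n with hV
  have hUm : MeasurableSet U := MeasurableSet.iUnion hMm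
  have hVm : MeasurableSet V := MeasurableSet.iUnion fun n => by
    rw [act_image_eq hXone hXmul]; exact (hXmeas _) (hMm n)
  have hμVU : μ V = μ U :=
    measure_iUnion_image_eq μ aX hXmeas hXmp hXone hXmul g1 M hMm hMd hMimgd
  have hcomplEq : μ Uᶜ = μ Vᶜ := by
    rw [measure_compl hUm (measure_ne_top μ U), measure_compl hVm (measure_ne_top μ V), hμVU]
  obtain ⟨g2, P2, hP2m, hP2sub, hP2d, hP2img, hP2imgd, hP2null, hP2cov⟩ :=
    exhaustion μ aX hXmeas hXmp hXone hXmul hXerg Uᶜ Vᶜ hUm.compl hVm.compl (le_of_eq hcomplEq)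
  -- combine the two families
  set gg : ℕ ⊕ ℕ → G := Sum.elim g1 g2 with hgg
  set PP : ℕ ⊕ ℕ → Set X := Sum.elim M P2 with hPP
  have hPPm : ∀ i, MeasurableSet (PP i) := by rintro (n | n); exacts [hMm n, hP2m n]
  have hPPd : Pairwise (Function.onFun Disjoint PP) := by
    refine pairwise_disjoint_sum_elim hMd hP2d fun m n => ?_
    exact Disjoint.mono (Set.subset_iUnion M m) (hP2sub n) disjoint_compl_right
  have himgPP : (fun i => aX (gg i) '' PP i)
      = Sum.elim (fun n => aX (g1 n) '' M n) (fun n => aX (g2 n) '' P2 n) := by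
    funext i; cases i <;> rfl
  have hQQd : Pairwise (Function.onFun Disjoint fun i => aX (gg i) '' PP i) := by
    rw [himgPP]
    refine pairwise_disjoint_sum_elim hMimgd hP2imgd fun m n => ?_
    exact Disjoint.mono (Set.subset_iUnion (fun k => aX (g1 k) '' M k) m) (hP2img n)
      disjoint_compl_right
  have hPPc : μ (⋃ i, PP i)ᶜ = 0 := by
    rw [Set.iUnion_sum]
    have : (⋃ n, PP (Sum.inl n)) = U := rfl
    rw [this]
    have h2 : (⋃ n, PP (Sum.inr n)) = ⋃ n, P2 n := rfl
    rw [h2, Set.compl_union]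
    refine measure_mono_null ?_ hP2null
    intro x hx
    exact ⟨hx.1, hx.2⟩
  have hQQc : μ (⋃ i, aX (gg i) '' PP i)ᶜ = 0 := by
    rw [himgPP, Set.iUnion_sum]
    have h1 : (⋃ n, Sum.elim (fun n => aX (g1 n) '' M n) (fun n => aX (g2 n) '' P2 n)
        (Sum.inl n)) = V := rfl
    have h2 : (⋃ n, Sum.elim (fun n => aX (g1 n) '' M n) (fun n => aX (g2 n) '' P2 n)
        (Sum.inr n)) = ⋃ n, aX (g2 n) '' P2 n := rfl
    rw [h1, h2, Set.compl_union]
    refine measure_mono_null ?_ (hP2cov hcomplEq)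
    intro x hx
    exact ⟨hx.1, hx.2⟩
  obtain ⟨φ, φ', hφm, hφ'm, hφmp, hφinv1, hφinv2, hφfull, hφspec⟩ :=
    assemble μ aX hXmeas hXmp hXone hXmul gg PP hPPm hPPd hQQd hPPc hQQc
  -- basic pointwise facts about φ on U
  have hUφA₂ : ∀ x ∈ U, φ x ∈ A₂ := by
    intro x hx
    obtain ⟨n, hn⟩ := Set.mem_iUnion.mp hx
    rw [hφspec (Sum.inl n) x hn]
    exact hMimg n (Set.mem_image_of_mem _ hn)
  have hUorb : ∀ x ∈ U, ∃ g, φ x = aX g x := by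
    intro x hx
    obtain ⟨n, hn⟩ := Set.mem_iUnion.mp hx
    exact ⟨g1 n, hφspec (Sum.inl n) x hn⟩
  have hUinv : ∀ x ∈ U, φ' (φ x) = x := by
    intro x hx
    refine hφinv1 x ?_
    rw [Set.iUnion_sum]
    exact Or.inl hx
  -- Step 2: the correcting element ψ on the Y side.
  obtain ⟨γe, hγe⟩ := exists_surjective_nat Γ
  set E : ℕ → Set X := fun k => {x | π₁ x = aY (γe k) (π₂ (φ x))} with hE
  have hEm : ∀ k, MeasurableSet (E k) := fun k =>
    measurableSet_eq_fun_std hπ₁m ((hYmeas _).comp (hπ₂m.comp hφm))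
  set W : Set X := A₁ ∩ {x | σ₂ (π₂ (φ x)) = φ x} ∩ {x | φ' (φ x) = x} ∩
      {x | σ₁ (π₁ x) = x} ∩ (φ ⁻¹' A₂) with hW
  have hWm : MeasurableSet W := by
    refine ((((hA₁m.inter ?_).inter ?_).inter ?_).inter (hφm hA₂m))
    · exact measurableSet_eq_fun_std (hσ₂m.comp (hπ₂m.comp hφm)) hφm
    · exact measurableSet_eq_fun_std (hφ'm.comp hφm) measurable_id
    · exact measurableSet_eq_fun_std (hσ₁m.comp hπ₁m) measurable_id
  set F : ℕ → Set X := fun k => W ∩ disjointed E k with hF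
  have hFm : ∀ k, MeasurableSet (F k) := fun k => hWm.inter (MeasurableSet.disjointed hEm k)
  have hFd : Pairwise (Function.onFun Disjoint F) := fun i j hij =>
    ((disjoint_disjointed E) hij).mono Set.inter_subset_right Set.inter_subset_right
  have hFE : ∀ k, F k ⊆ E k := fun k =>
    Set.inter_subset_right.trans (disjointed_subset E k)
  have hFW : ∀ k, F k ⊆ W := fun k => Set.inter_subset_left
  have hFU : (⋃ k, F k) = W ∩ ⋃ k, E k := by
    rw [hF, ← Set.inter_iUnion, iUnion_disjointed]
  -- a.e. facts
  have haU : ∀ᵐ x ∂μ, x ∈ A₁ → x ∈ U := by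
    rw [ae_iff]
    refine measure_mono_null ?_ hMnull
    intro x hx
    push_neg at hx
    exact ⟨hx.1, hx.2⟩
  have hσ₂ae : ∀ᵐ x ∂μ, φ x ∈ A₂ → σ₂ (π₂ (φ x)) = φ x := by
    have h := (ae_restrict_iff' hA₂m).mp hσ₂l
    have h0 : μ {z | ¬(z ∈ A₂ → σ₂ (π₂ z) = z)} = 0 := ae_iff.mp h
    have h1 : μ (φ ⁻¹' {z | ¬(z ∈ A₂ → σ₂ (π₂ z) = z)}) = 0 :=
      hφmp.quasiMeasurePreserving.preimage_null h0
    rw [ae_iff]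
    exact measure_mono_null (fun x hx => hx) h1
  have hσ₁ae : ∀ᵐ x ∂μ, x ∈ A₁ → σ₁ (π₁ x) = x := (ae_restrict_iff' hA₁m).mp hσ₁l
  have hsame' : ∀ᵐ x ∂μ, x ∈ A₁ →
      π₂ '' (A₂ ∩ Set.range fun g : G => aX g x) ⊆ Set.range fun s : Γ => aY s (π₁ x) :=
    (ae_restrict_iff' hA₁m).mp hsame
  have haeF : ∀ᵐ x ∂μ, x ∈ A₁ → x ∈ ⋃ k, F k := by
    filter_upwards [haU, hσ₂ae, hσ₁ae, hsame'] with x h1 h2 h3 h4 hxA₁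
    have hxU : x ∈ U := h1 hxA₁
    have hxA₂ : φ x ∈ A₂ := hUφA₂ x hxU
    have hxσ₂ : σ₂ (π₂ (φ x)) = φ x := h2 hxA₂
    have hxinv : φ' (φ x) = x := hUinv x hxU
    have hxσ₁ : σ₁ (π₁ x) = x := h3 hxA₁
    have hxW : x ∈ W := ⟨⟨⟨⟨hxA₁, hxσ₂⟩, hxinv⟩, hxσ₁⟩, hxA₂⟩
    have hxE : x ∈ ⋃ k, E k := by
      obtain ⟨g, hg⟩ := hUorb x hxU
      have hmem : π₂ (φ x) ∈ π₂ '' (A₂ ∩ Set.range fun g : G => aX g x) :=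
        Set.mem_image_of_mem _ ⟨hxA₂, ⟨g, hg.symm⟩⟩
      obtain ⟨s, hs⟩ := h4 hxA₁ hmem
      obtain ⟨k, hk⟩ := hγe s⁻¹
      refine Set.mem_iUnion.mpr ⟨k, ?_⟩
      show π₁ x = aY (γe k) (π₂ (φ x))
      rw [hk, ← hs, act_inv_act hYone hYmul]
    rw [hFU]
    exact ⟨hxW, hxE⟩
  -- the pieces in Y
  set D : ℕ → Set Y := fun k => {y | φ' (σ₂ y) ∈ F k ∧ π₂ (φ (φ' (σ₂ y))) = y} with hD
  have hDm : ∀ k, MeasurableSet (D k) := by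
    intro k
    refine MeasurableSet.inter ?_ ?_
    · exact (hσ₂m.comp measurable_id).comp measurable_id |>.comp measurable_id |> fun _ => by
        exact ((hφ'm.comp hσ₂m) (hFm k))
    · exact measurableSet_eq_fun_std (hπ₂m.comp (hφm.comp (hφ'm.comp hσ₂m))) measurable_id
  have hDimg : ∀ k, ∀ x ∈ F k, π₂ (φ x) ∈ D k := by
    intro k x hx
    obtain ⟨⟨⟨⟨hxA₁, hxσ₂⟩, hxinv⟩, hxσ₁⟩, hxA₂⟩ := hFW k hx
    constructor
    · show φ' (σ₂ (π₂ (φ x))) ∈ F k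
      rw [hxσ₂, hxinv]
      exact hx
    · show π₂ (φ (φ' (σ₂ (π₂ (φ x))))) = π₂ (φ x)
      rw [hxσ₂, hxinv]
  have hDd : Pairwise (Function.onFun Disjoint D) := by
    intro i j hij
    refine Set.disjoint_left.mpr fun y hyi hyj => ?_
    exact Set.disjoint_left.mp (hFd hij) hyi.1 hyj.1
  set R : ℕ → Set Y := fun k => aY (γe k) '' D k with hR
  have hRF : ∀ k, R k = π₁ '' F k := by
    intro k
    ext y'
    constructor
    · rintro ⟨y, hyD, rfl⟩
      refine ⟨φ' (σ₂ y), hyD.1, ?_⟩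
      have hxE : φ' (σ₂ y) ∈ E k := hFE k hyD.1
      have : π₁ (φ' (σ₂ y)) = aY (γe k) (π₂ (φ (φ' (σ₂ y)))) := hxE
      rw [this, hyD.2]
    · rintro ⟨x, hx, rfl⟩
      refine ⟨π₂ (φ x), hDimg k x hx, ?_⟩
      exact (hFE k hx).symm
  have hRm : ∀ k, MeasurableSet (R k) := fun k => by
    rw [hR]
    show MeasurableSet (aY (γe k) '' D k)
    rw [act_image_eq hYone hYmul]
    exact (hYmeas _) (hDm k)
  have hRd : Pairwise (Function.onFun Disjoint R) := by
    intro i j hij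
    refine Set.disjoint_left.mpr fun y' hyi hyj => ?_
    rw [hRF i] at hyi
    rw [hRF j] at hyj
    obtain ⟨x, hx, rfl⟩ := hyi
    obtain ⟨x', hx', hxx'⟩ := hyj
    have hxW := hFW i hx
    have hx'W := hFW j hx'
    have h1 : σ₁ (π₁ x) = x := hxW.1.2
    have h2 : σ₁ (π₁ x') = x' := hx'W.1.2
    have : x' = x := by rw [← h2, hxx', h1]
    exact Set.disjoint_left.mp (hFd hij) hx (this ▸ hx')
  have hμRD : η (⋃ k, R k) = η (⋃ k, D k) := by
    have : R = fun k => aY (γe k) '' D k := hR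
    rw [this]
    exact measure_iUnion_image_eq η aY hYmeas hYmp hYone hYmul γe D hDm hDd
      (by rw [← this]; exact hRd)
  have hUDm : MeasurableSet (⋃ k, D k) := MeasurableSet.iUnion hDm
  have hURm : MeasurableSet (⋃ k, R k) := MeasurableSet.iUnion hRm
  have hcomplEqY : η (⋃ k, D k)ᶜ = η (⋃ k, R k)ᶜ := by
    rw [measure_compl hUDm (measure_ne_top η _), measure_compl hURm (measure_ne_top η _), hμRD]
  obtain ⟨δe, PY, hPYm, hPYsub, hPYd, hPYimg, hPYimgd, hPYnull, hPYcov⟩ :=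
    exhaustion η aY hYmeas hYmp hYone hYmul hYerg (⋃ k, D k)ᶜ (⋃ k, R k)ᶜ
      hUDm.compl hURm.compl (le_of_eq hcomplEqY)
  set ggY : ℕ ⊕ ℕ → Γ := Sum.elim γe δe with hggY
  set PPY : ℕ ⊕ ℕ → Set Y := Sum.elim D PY with hPPY
  have hPPYm : ∀ i, MeasurableSet (PPY i) := by rintro (n | n); exacts [hDm n, hPYm n]
  have hPPYd : Pairwise (Function.onFun Disjoint PPY) := by
    refine pairwise_disjoint_sum_elim hDd hPYd fun m n => ?_
    exact Disjoint.mono (Set.subset_iUnion D m) (hPYsub n) disjoint_compl_right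
  have himgPPY : (fun i => aY (ggY i) '' PPY i)
      = Sum.elim (fun n => aY (γe n) '' D n) (fun n => aY (δe n) '' PY n) := by
    funext i; cases i <;> rfl
  have hQQYd : Pairwise (Function.onFun Disjoint fun i => aY (ggY i) '' PPY i) := by
    rw [himgPPY]
    refine pairwise_disjoint_sum_elim (by rw [← hR]; exact hRd) hPYimgd fun m n => ?_
    refine Disjoint.mono ?_ (hPYimg n) disjoint_compl_right
    rw [← hR]
    exact Set.subset_iUnion R m
  have hPPYc : η (⋃ i, PPY i)ᶜ = 0 := by
    rw [Set.iUnion_sum]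
    have h1 : (⋃ n, PPY (Sum.inl n)) = ⋃ k, D k := rfl
    have h2 : (⋃ n, PPY (Sum.inr n)) = ⋃ n, PY n := rfl
    rw [h1, h2, Set.compl_union]
    refine measure_mono_null ?_ hPYnull
    intro y hy
    exact ⟨hy.1, hy.2⟩
  have hQQYc : η (⋃ i, aY (ggY i) '' PPY i)ᶜ = 0 := by
    rw [himgPPY, Set.iUnion_sum]
    have h1 : (⋃ n, Sum.elim (fun n => aY (γe n) '' D n) (fun n => aY (δe n) '' PY n)
        (Sum.inl n)) = ⋃ k, R k := rfl
    have h2 : (⋃ n, Sum.elim (fun n => aY (γe n) '' D n) (fun n => aY (δe n) '' PY n)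
        (Sum.inr n)) = ⋃ n, aY (δe n) '' PY n := rfl
    rw [h1, h2, Set.compl_union]
    refine measure_mono_null ?_ (hPYcov hcomplEqY)
    intro y hy
    exact ⟨hy.1, hy.2⟩
  obtain ⟨ψ, ψ', hψm, hψ'm, hψmp, hψinv1, hψinv2, hψfull, hψspec⟩ :=
    assemble η aY hYmeas hYmp hYone hYmul ggY PPY hPPYm hPPYd hQQYd hPPYc hQQYc
  -- conclusion
  refine ⟨φ, ψ, hφm, hφmp, ⟨φ', hφ'm, ?_, ?_⟩, ?_, hψm, hψmp, ⟨ψ', hψ'm, ?_, ?_⟩, ?_, ?_, ?_⟩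
  · rw [ae_iff]
    refine measure_mono_null (fun x hx => ?_) hPPc
    intro hmem
    exact hx (hφinv1 x hmem)
  · rw [ae_iff]
    refine measure_mono_null (fun y hy => ?_) hQQc
    intro hmem
    exact hy (hφinv2 y hmem)
  · exact Filter.Eventually.of_forall hφfull
  · rw [ae_iff]
    refine measure_mono_null (fun y hy => ?_) hPPYc
    intro hmem
    exact hy (hψinv1 y hmem)
  · rw [ae_iff]
    refine measure_mono_null (fun y hy => ?_) hQQYc
    intro hmem
    exact hy (hψinv2 y hmem)
  · exact Filter.Eventually.of_forall hψfull
  · rw [ae_restrict_iff' hA₁m]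
    filter_upwards [haU] with x h1 hxA₁
    exact hUφA₂ x (h1 hxA₁)
  · rw [ae_restrict_iff' hA₁m]
    filter_upwards [haeF] with x h1 hxA₁
    obtain ⟨k, hk⟩ := Set.mem_iUnion.mp (h1 hxA₁)
    have hyD : π₂ (φ x) ∈ D k := hDimg k x hk
    have hψy : ψ (π₂ (φ x)) = aY (γe k) (π₂ (φ x)) := hψspec (Sum.inl k) _ hyD
    rw [hψy]
    exact hFE k hk
end
end
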